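/- arXiv:1112.2638 — 2 statements merged into one kernel-verified Lean document; each statement's English description precedes it below -/
import Mathlib

section
/- Representation of the parameterized Snell envelope after the exercise time (Proposition, part (i)): suppose 1 < k ≤ L+1 and C_{k−1}(j_1,…,j_{k−1}) = 1. Then for every r > j_{k−1}, almost surely Y*_r^{L−k+1, j_1,…,j_{k−1}} = Σ_{p=1}^{k−1} U_{j_p}^{p} ∏_{l=1}^{p−1} V_{j_l}^{l} + E[ Y*_{ρ^{j_{k−1}} ∨ r}^{L−k+1} | F_r ] · ∏_{l=1}^{k−1} V_{j_l}^{l}. -/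
open MeasureTheory
open Filter Topology

noncomputable section

variable {Ω : Type*} [m0 : MeasurableSpace Ω]

/-- `Y` is an essential supremum of the family `S` of random variables w.r.t. `μ`. -/
def IsEssSupFamily (μ : Measure Ω) (S : Set (Ω → ℝ)) (Y : Ω → ℝ) : Prop :=
  (∀ f ∈ S, f ≤ᵐ[μ] Y) ∧ ∀ Z : Ω → ℝ, (∀ f ∈ S, f ≤ᵐ[μ] Z) → Y ≤ᵐ[μ] Z

/-- `ECount a l j` is the number of indices `r ∈ [a, l]` with `j r = j l`, i.e. the number
of rights exercised at time `j l` in the non-decreasing chain `j a ≤ ... ≤ j l`. -/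
def ECount (a l : ℕ) (j : ℕ → ℕ) : ℕ :=
  ((Finset.Icc a l).filter fun r => j r = j l).card

/-- The volume constraint (given by `v`) and the refraction period constraint (given by the
stopping times `ρ`) hold at `ω` for the non-decreasing chain `j a ≤ ... ≤ j b` of exercise
dates; this is the event `C(j a, ..., j b) = 1`. -/
def SatCons (v ρ : ℕ → Ω → ℕ) (a b : ℕ) (j : ℕ → ℕ) (ω : Ω) : Prop :=
  (∀ l, a ≤ l → l ≤ b → ECount a l j ≤ v (j l) ω) ∧
  ∀ l, a < l → l ≤ b → j (l - 1) < j l → ρ (j (l - 1)) ω ≤ j l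

/-- The family of conditional payoffs whose essential supremum is the auxiliary Snell
envelope `Y*_r^{L-k+1}` of the constrained generic multiple stopping problem. -/
def auxFamily (T L : ℕ) (μ : Measure Ω) (ℱ : Filtration ℕ m0)
    (U V : ℕ → ℕ → Ω → ℝ) (v ρ : ℕ → Ω → ℕ) (k r : ℕ) : Set (Ω → ℝ) :=
  { g | ∃ τ : ℕ → Ω → ℕ,
      (∀ p, IsStoppingTime ℱ (fun ω => ((τ p ω : ℕ) : WithTop ℕ))) ∧
      (∀ ω, r ≤ τ k ω) ∧
      (∀ p, k ≤ p → p < L → ∀ ω, τ p ω ≤ τ (p + 1) ω) ∧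
      (∀ ω, τ L ω ≤ T + 1) ∧
      (∀ ω, SatCons v ρ k L (fun p => τ p ω) ω) ∧
      g = μ[(fun ω => ∑ p ∈ Finset.Icc k L,
          U p (τ p ω) ω * ∏ l ∈ Finset.Ico k p, V l (τ l ω) ω)|ℱ r] }

/-- The non-decreasing chain `j 1 ≤ j 2 ≤ ... ≤ j m ≤ d`. -/
def DetChain (m d : ℕ) (j : ℕ → ℕ) : Prop :=
  (∀ p, 1 ≤ p → p < m → j p ≤ j (p + 1)) ∧ ∀ p, 1 ≤ p → p ≤ m → j p ≤ d

/-- The family of conditional payoffs whose essential supremum is the parameterized Snell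
envelope `Y*_r^{L-k+1, j 1, ..., j (k-1)}` of the constrained generic multiple stopping
problem: the first `k - 1` exercise dates are frozen at `j 1 ≤ ... ≤ j (k-1)`, the remaining
ones are stopping times `r ≤ τ k ≤ ... ≤ τ L ≤ T + 1` such that the full chain satisfies the
constraints, and the payoff is the constrained generic cashflow of the full chain. -/
def parFamily (T L : ℕ) (μ : Measure Ω) (ℱ : Filtration ℕ m0)
    (U V : ℕ → ℕ → Ω → ℝ) (v ρ : ℕ → Ω → ℕ) (k r : ℕ) (j : ℕ → ℕ) : Set (Ω → ℝ) :=
  { g | ∃ τ : ℕ → Ω → ℕ,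
      (∀ p, IsStoppingTime ℱ (fun ω => ((τ p ω : ℕ) : WithTop ℕ))) ∧
      (∀ ω, r ≤ τ k ω) ∧
      (∀ p, k ≤ p → p < L → ∀ ω, τ p ω ≤ τ (p + 1) ω) ∧
      (∀ ω, τ L ω ≤ T + 1) ∧
      (∀ ω, SatCons v ρ 1 L (fun p => if p < k then j p else τ p ω) ω) ∧
      g = μ[(fun ω => ∑ p ∈ Finset.Icc 1 L,
          U p (if p < k then j p else τ p ω) ω *
            ∏ l ∈ Finset.Ico 1 p, V l (if l < k then j l else τ l ω) ω)|ℱ r] }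


set_option linter.unusedSectionVars false
set_option maxHeartbeats 1000000

-- duplicate removed
/-- stopping times valued in `ℕ` are measurable -/
lemma MeasureTheory.IsStoppingTime.measurable_nat {ℱ : Filtration ℕ m0} {τ : Ω → ℕ}
    (hτ : IsStoppingTime ℱ (fun ω => ((τ ω : ℕ) : WithTop ℕ))) : Measurable τ := by
  refine measurable_to_countable' fun i => ?_
  have : τ ⁻¹' {i} = {ω | τ ω = i} := rfl
  rw [this]
  exact ℱ.le i _ (by simpa using hτ.measurableSet_eq i)

lemma stopping_nat_le {ℱ : Filtration ℕ m0} {τ : Ω → ℕ}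
    (hτ : IsStoppingTime ℱ (fun ω => ((τ ω : ℕ) : WithTop ℕ))) (n : ℕ) :
    MeasurableSet[ℱ n] {ω | τ ω ≤ n} := by
  have h := hτ n
  simpa using h

lemma isStoppingTime_of_nat_le {ℱ : Filtration ℕ m0} {τ : Ω → ℕ}
    (h : ∀ n, MeasurableSet[ℱ n] {ω | τ ω ≤ n}) :
    IsStoppingTime ℱ (fun ω => ((τ ω : ℕ) : WithTop ℕ)) := by
  intro n
  simpa using h n

lemma comp_eq_sum_indicator (f : ℕ → Ω → ℝ) (τ : Ω → ℕ) (N : ℕ) (hb : ∀ ω, τ ω ≤ N) :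
    (fun ω => f (τ ω) ω)
      = fun ω => ∑ i ∈ Finset.range (N + 1), ({ω' | τ ω' = i}).indicator (f i) ω := by
  funext ω
  rw [Finset.sum_eq_single (τ ω)]
  · simp [Set.indicator_of_mem, Set.mem_setOf_eq]
  · intro i _ hne
    exact Set.indicator_of_notMem (by simp [Set.mem_setOf_eq]; exact fun h => hne h.symm) _
  · intro h
    exact absurd (Finset.mem_range.2 (Nat.lt_succ_of_le (hb ω))) h

lemma measurable_comp_nat {f : ℕ → Ω → ℝ} {τ : Ω → ℕ} (N : ℕ)
    (hf : ∀ i, i ≤ N → Measurable (f i)) (hτ : Measurable τ) (hb : ∀ ω, τ ω ≤ N) :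
    Measurable fun ω => f (τ ω) ω := by
  rw [comp_eq_sum_indicator f τ N hb]
  refine Finset.measurable_sum _ fun i hi => ?_
  exact (hf i (Nat.lt_succ_iff.1 (Finset.mem_range.1 hi))).indicator
    (hτ (measurableSet_singleton i))

lemma integrable_comp_nat {μ : Measure Ω} {f : ℕ → Ω → ℝ} {τ : Ω → ℕ} (N : ℕ)
    (hf : ∀ i, i ≤ N → Integrable (f i) μ) (hτ : Measurable τ) (hb : ∀ ω, τ ω ≤ N) :
    Integrable (fun ω => f (τ ω) ω) μ := by
  rw [comp_eq_sum_indicator f τ N hb]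
  refine integrable_finset_sum _ fun i hi => ?_
  exact (hf i (Nat.lt_succ_iff.1 (Finset.mem_range.1 hi))).indicator
    (hτ (measurableSet_singleton i))

/-- pasting stopping times along a time-valued random variable -/
lemma paste_isStoppingTime {ℱ : Filtration ℕ m0} (σ' : Ω → ℕ)
    (hσ : ∀ s, MeasurableSet[ℱ s] {ω | σ' ω = s}) (κ : ℕ → Ω → ℕ)
    (hκ : ∀ s, IsStoppingTime ℱ (fun ω => ((κ s ω : ℕ) : WithTop ℕ))) (hge : ∀ s ω, σ' ω = s → s ≤ κ s ω) :
    IsStoppingTime ℱ fun ω => ((κ (σ' ω) ω : ℕ) : WithTop ℕ) := by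
  refine isStoppingTime_of_nat_le fun n => ?_
  have heq : {ω | κ (σ' ω) ω ≤ n}
      = ⋃ s ∈ Finset.range (n + 1), ({ω | σ' ω = s} ∩ {ω | κ s ω ≤ n}) := by
    ext ω
    simp only [Set.mem_setOf_eq, Set.mem_iUnion, Set.mem_inter_iff, Finset.mem_range]
    constructor
    · intro h
      exact ⟨σ' ω, Nat.lt_succ_of_le (le_trans (hge _ ω rfl) h), rfl, h⟩
    · rintro ⟨s, _, hs, h⟩
      rwa [hs]
  rw [heq]
  refine MeasurableSet.biUnion (Finset.range (n + 1)).countable_toSet fun s hs => ?_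
  have hsn : s ≤ n := Nat.lt_succ_iff.1 (Finset.mem_range.1 hs)
  exact MeasurableSet.inter (ℱ.mono hsn _ (hσ s)) (stopping_nat_le (hκ s) n)

/-- pasting two stopping times over an event in `ℱ s` -/
lemma paste2_isStoppingTime {ℱ : Filtration ℕ m0} (s : ℕ) (A : Set Ω)
    (hA : MeasurableSet[ℱ s] A) {τ1 τ2 : Ω → ℕ}
    (h1 : IsStoppingTime ℱ (fun ω => ((τ1 ω : ℕ) : WithTop ℕ)))
    (h2 : IsStoppingTime ℱ (fun ω => ((τ2 ω : ℕ) : WithTop ℕ)))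
    (hge1 : ∀ ω, s ≤ τ1 ω) (hge2 : ∀ ω, s ≤ τ2 ω) [DecidablePred (· ∈ A)] :
    IsStoppingTime ℱ fun ω => (((if ω ∈ A then τ1 ω else τ2 ω) : ℕ) : WithTop ℕ) := by
  refine isStoppingTime_of_nat_le fun n => ?_
  by_cases hsn : s ≤ n
  · have heq : {ω | (if ω ∈ A then τ1 ω else τ2 ω) ≤ n}
        = (A ∩ {ω | τ1 ω ≤ n}) ∪ (Aᶜ ∩ {ω | τ2 ω ≤ n}) := by
      ext ω
      by_cases hω : ω ∈ A <;> simp [hω]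
    rw [heq]
    exact ((ℱ.mono hsn _ hA).inter (stopping_nat_le h1 n)).union
      (((ℱ.mono hsn _ hA).compl).inter (stopping_nat_le h2 n))
  · have heq : {ω | (if ω ∈ A then τ1 ω else τ2 ω) ≤ n} = ∅ := by
      ext ω
      simp only [Set.mem_setOf_eq, Set.mem_empty_iff_false, iff_false, not_le]
      by_cases hω : ω ∈ A
      · simp only [hω, if_true]
        exact lt_of_lt_of_le (Nat.lt_of_not_le hsn) (hge1 ω)
      · simp only [hω, if_false]
        exact lt_of_lt_of_le (Nat.lt_of_not_le hsn) (hge2 ω)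
    rw [heq]
    exact @MeasurableSet.empty _ (ℱ n)

lemma ECount_congr (a l : ℕ) {j j' : ℕ → ℕ} (h : ∀ p, a ≤ p → p ≤ l → j p = j' p)
    (hal : a ≤ l) : ECount a l j = ECount a l j' := by
  unfold ECount
  congr 1
  refine Finset.filter_congr fun p hp => ?_
  obtain ⟨h1, h2⟩ := Finset.mem_Icc.1 hp
  rw [h p h1 h2, h l hal le_rfl]

lemma SatCons_congr {v ρ : ℕ → Ω → ℕ} {a b : ℕ} {j j' : ℕ → ℕ} {ω : Ω}
    (h : ∀ p, a ≤ p → p ≤ b → j p = j' p) (hab : a ≤ b)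
    (hs : SatCons v ρ a b j ω) : SatCons v ρ a b j' ω := by
  obtain ⟨h1, h2⟩ := hs
  constructor
  · intro l hal hlb
    rw [← ECount_congr a l (fun p hp hpl => h p hp (le_trans hpl hlb)) hal, ← h l hal hlb]
    exact h1 l hal hlb
  · intro l hal hlb
    rw [← h l (le_of_lt hal) hlb, ← h (l-1) (by omega) (by omega)]
    exact h2 l hal hlb

lemma satCons_const {v ρ : ℕ → Ω → ℕ} {a b L T : ℕ} {ω : Ω}
    (hv : v (T + 1) ω = L) (ha : 1 ≤ a) (hb : b ≤ L) :
    SatCons v ρ a b (fun _ => T + 1) ω := by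
  constructor
  · intro l hal hlb
    have : ECount a l (fun _ => T + 1) ≤ (Finset.Icc a l).card := by
      unfold ECount; exact Finset.card_filter_le _ _
    rw [Nat.card_Icc] at this
    calc ECount a l (fun _ => T + 1) ≤ l + 1 - a := this
      _ ≤ L := by omega
      _ = v (T + 1) ω := hv.symm
  · intro l _ _ h
    exact absurd h (lt_irrefl _)

/-- dropping small times whose values differ from the last one -/
lemma ECount_drop {a k l : ℕ} {j : ℕ → ℕ} (hak : a ≤ k) (hkl : k ≤ l)
    (h : ∀ p, a ≤ p → p < k → j p ≠ j l) : ECount a l j = ECount k l j := by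
  unfold ECount
  congr 1
  ext p
  simp only [Finset.mem_filter, Finset.mem_Icc]
  constructor
  · rintro ⟨⟨h1, h2⟩, h3⟩
    by_cases hpk : k ≤ p
    · exact ⟨⟨hpk, h2⟩, h3⟩
    · exact absurd h3 (h p h1 (Nat.lt_of_not_le hpk))
  · rintro ⟨⟨h1, h2⟩, h3⟩
    exact ⟨⟨le_trans hak h1, h2⟩, h3⟩

set_option linter.unusedSectionVars false

lemma DetChain.mono_le {m d : ℕ} {j : ℕ → ℕ} (h : DetChain m d j)
    {p q : ℕ} (hp : 1 ≤ p) (hpq : p ≤ q) (hq : q ≤ m) : j p ≤ j q := by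
  induction q with
  | zero => omega
  | succ n ih =>
    rcases Nat.lt_or_ge p (n + 1) with hlt | hge
    · exact le_trans (ih (by omega) (by omega)) (h.1 n (by omega) (by omega))
    · have : p = n + 1 := by omega
      rw [this]

/-- splitting the cashflow of a chain at position `k` -/
lemma cashflow_split (U V : ℕ → ℕ → Ω → ℝ) (k L : ℕ) (hk : 1 ≤ k) (hkL : k ≤ L + 1)
    (J : ℕ → ℕ) (ω : Ω) :
    ∑ p ∈ Finset.Icc 1 L, U p (J p) ω * ∏ l ∈ Finset.Ico 1 p, V l (J l) ω
      = (∑ p ∈ Finset.Icc 1 (k - 1), U p (J p) ω * ∏ l ∈ Finset.Ico 1 p, V l (J l) ω)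
        + (∏ l ∈ Finset.Icc 1 (k - 1), V l (J l) ω)
          * ∑ p ∈ Finset.Icc k L, U p (J p) ω * ∏ l ∈ Finset.Ico k p, V l (J l) ω := by
  have hIcc1 : Finset.Icc 1 L = Finset.Ico 1 (L + 1) := by
    rw [Finset.Ico_add_one_right_eq_Icc]
  have hIcc2 : Finset.Icc 1 (k - 1) = Finset.Ico 1 k := by
    rw [← Finset.Ico_add_one_right_eq_Icc]
    congr 1
    omega
  have hIcc3 : Finset.Icc k L = Finset.Ico k (L + 1) := by
    rw [Finset.Ico_add_one_right_eq_Icc]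
  rw [hIcc1, hIcc2, hIcc3,
    ← Finset.sum_Ico_consecutive _ hk (by omega : k ≤ L + 1)]
  congr 1
  rw [Finset.mul_sum]
  refine Finset.sum_congr rfl fun p hp => ?_
  obtain ⟨hkp, _⟩ := Finset.mem_Ico.1 hp
  rw [← Finset.prod_Ico_consecutive (fun l => V l (J l) ω) hk hkp]
  ring

/-- uniform bound on the payoff of a stopped chain -/
lemma payoff_abs_le (U V : ℕ → ℕ → Ω → ℝ) (k L T : ℕ) (D : ℕ → ℝ)
    (hD : ∀ l, 1 ≤ D l)
    (hV0 : ∀ l i ω, k ≤ l → l < L → i ≤ T + 1 → 0 ≤ V l i ω ∧ V l i ω ≤ D l)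
    (τ : ℕ → Ω → ℕ) (hb : ∀ p, k ≤ p → p ≤ L → ∀ ω, τ p ω ≤ T + 1) (ω : Ω) :
    |∑ p ∈ Finset.Icc k L, U p (τ p ω) ω * ∏ l ∈ Finset.Ico k p, V l (τ l ω) ω|
      ≤ ∑ p ∈ Finset.Icc k L,
          (∑ i ∈ Finset.range (T + 2), |U p i ω|) * ∏ l ∈ Finset.Ico k L, D l := by
  refine le_trans (Finset.abs_sum_le_sum_abs _ _) (Finset.sum_le_sum fun p hp => ?_)
  obtain ⟨hkp, hpL⟩ := Finset.mem_Icc.1 hp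
  have hprod_nonneg : 0 ≤ ∏ l ∈ Finset.Ico k p, V l (τ l ω) ω := by
    refine Finset.prod_nonneg fun l hl => ?_
    obtain ⟨h1, h2⟩ := Finset.mem_Ico.1 hl
    exact (hV0 l (τ l ω) ω h1 (by omega) (hb l h1 (by omega) ω)).1
  rw [abs_mul, abs_of_nonneg hprod_nonneg]
  refine mul_le_mul ?_ ?_ hprod_nonneg ?_
  · refine Finset.single_le_sum (f := fun i => |U p i ω|) (fun i _ => abs_nonneg _) ?_
    exact Finset.mem_range.2 (by have := hb p hkp hpL ω; omega)
  · calc ∏ l ∈ Finset.Ico k p, V l (τ l ω) ω ≤ ∏ l ∈ Finset.Ico k p, D l := by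
          refine Finset.prod_le_prod (fun l hl => ?_) (fun l hl => ?_)
          · obtain ⟨h1, h2⟩ := Finset.mem_Ico.1 hl
            exact (hV0 l (τ l ω) ω h1 (by omega) (hb l h1 (by omega) ω)).1
          · obtain ⟨h1, h2⟩ := Finset.mem_Ico.1 hl
            exact (hV0 l (τ l ω) ω h1 (by omega) (hb l h1 (by omega) ω)).2
      _ ≤ ∏ l ∈ Finset.Ico k L, D l := by
          rw [← Finset.prod_Ico_consecutive (fun l => D l) hkp (by omega : p ≤ L)]
          have h1 : (1:ℝ) ≤ ∏ l ∈ Finset.Ico p L, D l := by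
            have := Finset.prod_le_prod (f := fun _ : ℕ => (1:ℝ)) (g := fun l => D l)
              (s := Finset.Ico p L) (fun _ _ => zero_le_one) (fun l _ => hD l)
            simpa using this
          refine le_mul_of_one_le_right ?_ h1
          exact Finset.prod_nonneg fun l _ => le_trans zero_le_one (hD l)
  · exact Finset.sum_nonneg fun i _ => abs_nonneg _

lemma chain_mono_le {τ : ℕ → Ω → ℕ} {k L : ℕ}
    (h : ∀ p, k ≤ p → p < L → ∀ ω, τ p ω ≤ τ (p + 1) ω)
    {p q : ℕ} (hk : k ≤ p) (hpq : p ≤ q) (hq : q ≤ L) (ω : Ω) : τ p ω ≤ τ q ω := by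
  induction q with
  | zero => have : p = 0 := by omega
            rw [this]
  | succ n ih =>
    rcases Nat.lt_or_ge p (n + 1) with hlt | hge
    · exact le_trans (ih (by omega) (by omega)) (h n (by omega) (by omega) ω)
    · have : p = n + 1 := by omega
      rw [this]

/-- joining a deterministic head chain with a stopped tail chain -/
lemma satCons_join {v ρ : ℕ → Ω → ℕ} {k L : ℕ} (hk : 2 ≤ k) (hkL : k ≤ L)
    {j τω : ℕ → ℕ} {ω : Ω}
    (hC : SatCons v ρ 1 (k - 1) j ω) (hT : SatCons v ρ k L τω ω)
    (hjm : ∀ p, 1 ≤ p → p ≤ k - 1 → j p ≤ j (k - 1))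
    (hlt : ∀ p, k ≤ p → p ≤ L → j (k - 1) < τω p)
    (hρ : ρ (j (k - 1)) ω ≤ τω k) :
    SatCons v ρ 1 L (fun p => if p < k then j p else τω p) ω := by
  set mix : ℕ → ℕ := fun p => if p < k then j p else τω p with hmix
  constructor
  · intro l h1l hlL
    by_cases hlk : l < k
    · have hmj : ∀ p, 1 ≤ p → p ≤ l → mix p = j p := fun p _ hpl => if_pos (by omega)
      have hml : mix l = j l := if_pos hlk
      rw [ECount_congr 1 l hmj h1l, hml]
      exact hC.1 l h1l (by omega)
    · push_neg at hlk
      have hml : mix l = τω l := if_neg (by omega)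
      have h1 : ECount 1 l mix = ECount k l mix := by
        refine ECount_drop (by omega : 1 ≤ k) hlk fun p h1p hpk => ?_
        have : mix p = j p := if_pos hpk
        rw [this, hml]
        exact Nat.ne_of_lt (lt_of_le_of_lt (hjm p h1p (by omega)) (hlt l hlk hlL))
      have h2 : ECount k l mix = ECount k l τω :=
        ECount_congr k l (fun p hkp _ => if_neg (by omega)) hlk
      rw [h1, h2, hml]
      exact hT.1 l hlk hlL
  · intro l h1l hlL hjl
    by_cases hlk : l < k
    · have e1 : mix l = j l := if_pos hlk
      have e2 : mix (l - 1) = j (l - 1) := if_pos (by omega)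
      rw [e1, e2] at hjl ⊢
      exact hC.2 l h1l (by omega) hjl
    · push_neg at hlk
      have e1 : mix l = τω l := if_neg (by omega)
      by_cases hlk' : l = k
      · have e2 : mix (l - 1) = j (k - 1) := by
          subst hlk'
          exact if_pos (by omega)
        rw [e1, e2, hlk']
        exact hρ
      · have e2 : mix (l - 1) = τω (l - 1) := if_neg (by omega)
        rw [e1, e2] at hjl ⊢
        exact hT.2 l (by omega) hlL hjl

open Filter in
/-- conditional monotone convergence -/
lemma tendsto_condexp_of_monotone {μ : Measure Ω} [IsFiniteMeasure μ]
    {m : MeasurableSpace Ω} (hm : m ≤ m0)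
    {g : ℕ → Ω → ℝ} {G : Ω → ℝ} (hgint : ∀ n, Integrable (g n) μ) (hGint : Integrable G μ)
    (hmono : ∀ᵐ ω ∂μ, Monotone fun n => g n ω)
    (htend : ∀ᵐ ω ∂μ, Tendsto (fun n => g n ω) atTop (𝓝 (G ω))) :
    ∀ᵐ ω ∂μ, Tendsto (fun n => (μ[g n|m]) ω) atTop (𝓝 ((μ[G|m]) ω)) := by
  classical
  have hgle : ∀ n, g n ≤ᵐ[μ] G := by
    intro n
    filter_upwards [hmono, htend] with ω hmω htω
    exact ge_of_tendsto htω (Filter.eventually_atTop.2 ⟨n, fun c hc => hmω hc⟩)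
  set c : ℕ → Ω → ℝ := fun n => μ[g n|m] with hc
  set cG : Ω → ℝ := μ[G|m] with hcG
  have hcmono : ∀ᵐ ω ∂μ, Monotone fun n => c n ω := by
    have h1 : ∀ n : ℕ, c n ≤ᵐ[μ] c (n + 1) := by
      intro n
      refine condExp_mono (hgint n) (hgint (n + 1)) ?_
      filter_upwards [hmono] with ω hmω
      exact hmω (Nat.le_succ n)
    have := ae_all_iff.2 h1
    filter_upwards [this] with ω hω
    exact monotone_nat_of_le_succ hω
  have hcle : ∀ᵐ ω ∂μ, ∀ n, c n ω ≤ cG ω :=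
    ae_all_iff.2 fun n => condExp_mono (hgint n) hGint (hgle n)
  set e : Ω → ℝ := fun ω =>
    if h : BddAbove (Set.range fun n => c n ω) then ⨆ n, c n ω else 0 with he
  have htende : ∀ᵐ ω ∂μ, Tendsto (fun n => c n ω) atTop (𝓝 (e ω)) := by
    filter_upwards [hcmono, hcle] with ω hm hz
    have hbdd : BddAbove (Set.range fun n => c n ω) := ⟨cG ω, by rintro y ⟨n, rfl⟩; exact hz n⟩
    rw [he]; simp only [hbdd, dif_pos]
    exact tendsto_atTop_ciSup hm hbdd
  have hemeas : @AEStronglyMeasurable Ω ℝ _ m0 m0 e μ :=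
    aestronglyMeasurable_of_tendsto_ae atTop
      (fun n => (integrable_condExp : Integrable (c n) μ).1) htende
  have heint : Integrable e μ := by
    refine Integrable.mono' (((integrable_condExp (m := m) (f := g 0)).abs).add
      ((integrable_condExp (m := m) (f := G)).abs)) hemeas ?_
    filter_upwards [hcmono, hcle, htende] with ω hm hz ht
    have h1 : c 0 ω ≤ e ω := ge_of_tendsto' ht (fun n => hm (Nat.zero_le n))
    have h2 : e ω ≤ cG ω := le_of_tendsto' ht (fun n => hz n)
    rw [Real.norm_eq_abs, abs_le]
    constructor
    · have := neg_abs_le (c 0 ω)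
      have h3 : (0:ℝ) ≤ |cG ω| := abs_nonneg _
      calc -(|c 0 ω| + |cG ω|) ≤ -(|c 0 ω|) := by linarith
        _ ≤ c 0 ω := neg_abs_le _
        _ ≤ e ω := h1
    · have h3 : (0:ℝ) ≤ |c 0 ω| := abs_nonneg _
      calc e ω ≤ cG ω := h2
        _ ≤ |cG ω| := le_abs_self _
        _ ≤ |c 0 ω| + |cG ω| := by linarith
  have hintc : ∀ n, ∫ ω, c n ω ∂μ = ∫ ω, g n ω ∂μ := fun n => integral_condExp hm
  have hintcG : ∫ ω, cG ω ∂μ = ∫ ω, G ω ∂μ := integral_condExp hm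
  have h1 : Tendsto (fun n => ∫ ω, c n ω ∂μ) atTop (𝓝 (∫ ω, e ω ∂μ)) :=
    integral_tendsto_of_tendsto_of_monotone (fun n => (integrable_condExp : Integrable (c n) μ))
      heint hcmono htende
  have h2 : Tendsto (fun n => ∫ ω, c n ω ∂μ) atTop (𝓝 (∫ ω, cG ω ∂μ)) := by
    simp only [hintc, hintcG]
    exact integral_tendsto_of_tendsto_of_monotone hgint hGint hmono htend
  have heq : ∫ ω, e ω ∂μ = ∫ ω, cG ω ∂μ := tendsto_nhds_unique h1 h2
  have hele : e ≤ᵐ[μ] cG := by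
    filter_upwards [hcle, htende] with ω hz ht
    exact le_of_tendsto' ht (fun n => hz n)
  have hcGint : Integrable cG μ := integrable_condExp
  have hsubint : Integrable (fun ω => cG ω - e ω) μ := hcGint.sub heint
  have hnn : 0 ≤ᵐ[μ] fun ω => cG ω - e ω := by
    filter_upwards [hele] with ω hω
    simpa [sub_nonneg] using hω
  have hz' : ∫ ω, (cG ω - e ω) ∂μ = 0 := by
    rw [integral_sub hcGint heint]
    linarith
  have h0 : (fun ω => cG ω - e ω) =ᵐ[μ] 0 :=
    (integral_eq_zero_iff_of_nonneg_ae hnn hsubint).1 hz'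
  filter_upwards [htende, h0] with ω ht hω
  have : e ω = cG ω := by
    have := hω
    simp only [Pi.zero_apply] at this
    linarith [this]
  rwa [this] at ht

def tailPay (U V : ℕ → ℕ → Ω → ℝ) (k L : ℕ) (τ : ℕ → Ω → ℕ) : Ω → ℝ :=
  fun ω => ∑ p ∈ Finset.Icc k L, U p (τ p ω) ω * ∏ l ∈ Finset.Ico k p, V l (τ l ω) ω

lemma tailPay_congr {U V : ℕ → ℕ → Ω → ℝ} {k L : ℕ} {τ τ' : ℕ → Ω → ℕ} {ω : Ω}
    (h : ∀ p, k ≤ p → p ≤ L → τ p ω = τ' p ω) :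
    tailPay U V k L τ ω = tailPay U V k L τ' ω := by
  unfold tailPay
  refine Finset.sum_congr rfl fun p hp => ?_
  obtain ⟨h1, h2⟩ := Finset.mem_Icc.1 hp
  rw [h p h1 h2]
  congr 1
  refine Finset.prod_congr rfl fun l hl => ?_
  obtain ⟨h3, h4⟩ := Finset.mem_Ico.1 hl
  rw [h l h3 (by omega)]

lemma tailPay_measurable {U V : ℕ → ℕ → Ω → ℝ} {k L T : ℕ}
    (hUm : ∀ p i, k ≤ p → p ≤ L → i ≤ T + 1 → Measurable (U p i))
    (hVm : ∀ l i, k ≤ l → l < L → i ≤ T + 1 → Measurable (V l i))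
    {τ : ℕ → Ω → ℕ} (hτm : ∀ p, k ≤ p → p ≤ L → Measurable (τ p))
    (hτb : ∀ p, k ≤ p → p ≤ L → ∀ ω, τ p ω ≤ T + 1) :
    Measurable (tailPay U V k L τ) := by
  unfold tailPay
  refine Finset.measurable_sum _ fun p hp => ?_
  obtain ⟨h1, h2⟩ := Finset.mem_Icc.1 hp
  refine Measurable.mul ?_ ?_
  · exact measurable_comp_nat (T + 1) (fun i hi => hUm p i h1 h2 hi) (hτm p h1 h2) (hτb p h1 h2)
  · refine Finset.measurable_prod _ fun l hl => ?_
    obtain ⟨h3, h4⟩ := Finset.mem_Ico.1 hl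
    exact measurable_comp_nat (T + 1) (fun i hi => hVm l i h3 (by omega) hi)
      (hτm l h3 (by omega)) (hτb l h3 (by omega))

lemma tailPay_integrable {μ : Measure Ω} {U V : ℕ → ℕ → Ω → ℝ} {k L T : ℕ} {D : ℕ → ℝ}
    (hD : ∀ l, 1 ≤ D l)
    (hV0 : ∀ l i ω, k ≤ l → l < L → i ≤ T + 1 → 0 ≤ V l i ω ∧ V l i ω ≤ D l)
    (hUint : ∀ p i, k ≤ p → p ≤ L → i ≤ T + 1 → Integrable (U p i) μ)
    (hUm : ∀ p i, k ≤ p → p ≤ L → i ≤ T + 1 → Measurable (U p i))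
    (hVm : ∀ l i, k ≤ l → l < L → i ≤ T + 1 → Measurable (V l i))
    {τ : ℕ → Ω → ℕ} (hτm : ∀ p, k ≤ p → p ≤ L → Measurable (τ p))
    (hτb : ∀ p, k ≤ p → p ≤ L → ∀ ω, τ p ω ≤ T + 1) :
    Integrable (tailPay U V k L τ) μ := by
  have hMint : Integrable (fun ω => ∑ p ∈ Finset.Icc k L,
      (∑ i ∈ Finset.range (T + 2), |U p i ω|) * ∏ l ∈ Finset.Ico k L, D l) μ := by
    refine integrable_finset_sum _ fun p hp => ?_
    obtain ⟨h1, h2⟩ := Finset.mem_Icc.1 hp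
    refine Integrable.mul_const ?_ _
    refine integrable_finset_sum _ fun i hi => ?_
    exact (hUint p i h1 h2 (Nat.lt_succ_iff.1 (Finset.mem_range.1 hi))).abs
  refine Integrable.mono' hMint (tailPay_measurable hUm hVm hτm hτb).aestronglyMeasurable ?_
  refine Eventually.of_forall fun ω => ?_
  rw [Real.norm_eq_abs]
  exact payoff_abs_le U V k L T D hD hV0 τ hτb ω

def headPay (U V : ℕ → ℕ → Ω → ℝ) (k : ℕ) (j : ℕ → ℕ) : Ω → ℝ :=
  fun ω => ∑ p ∈ Finset.Icc 1 (k - 1), U p (j p) ω * ∏ l ∈ Finset.Ico 1 p, V l (j l) ω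

def headProd (V : ℕ → ℕ → Ω → ℝ) (k : ℕ) (j : ℕ → ℕ) : Ω → ℝ :=
  fun ω => ∏ l ∈ Finset.Icc 1 (k - 1), V l (j l) ω

/-- splitting the mixed cashflow -/
lemma mixPay_split (U V : ℕ → ℕ → Ω → ℝ) (k L : ℕ) (hk : 1 ≤ k) (hkL : k ≤ L + 1)
    (j : ℕ → ℕ) (τ : ℕ → Ω → ℕ) :
    (fun ω => ∑ p ∈ Finset.Icc 1 L, U p (if p < k then j p else τ p ω) ω *
        ∏ l ∈ Finset.Ico 1 p, V l (if l < k then j l else τ l ω) ω)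
      = fun ω => headPay U V k j ω + headProd V k j ω * tailPay U V k L τ ω := by
  funext ω
  rw [cashflow_split U V k L hk hkL (fun p => if p < k then j p else τ p ω) ω]
  congr 1
  · unfold headPay
    refine Finset.sum_congr rfl fun p hp => ?_
    obtain ⟨h1, h2⟩ := Finset.mem_Icc.1 hp
    rw [if_pos (by omega : p < k)]
    congr 1
    refine Finset.prod_congr rfl fun l hl => ?_
    obtain ⟨h3, h4⟩ := Finset.mem_Ico.1 hl
    rw [if_pos (by omega : l < k)]
  · unfold headProd tailPay
    congr 1
    · refine Finset.prod_congr rfl fun l hl => ?_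
      obtain ⟨h3, h4⟩ := Finset.mem_Icc.1 hl
      rw [if_pos (by omega : l < k)]
    · refine Finset.sum_congr rfl fun p hp => ?_
      obtain ⟨h1, h2⟩ := Finset.mem_Icc.1 hp
      rw [if_neg (by omega : ¬ p < k)]
      congr 1
      refine Finset.prod_congr rfl fun l hl => ?_
      obtain ⟨h3, h4⟩ := Finset.mem_Ico.1 hl
      rw [if_neg (by omega : ¬ l < k)]


lemma exists_essSupFamily (μ : Measure Ω) [IsFiniteMeasure μ] (S : Set (Ω → ℝ))
    (hne : S.Nonempty) (hint : ∀ f ∈ S, Integrable f μ)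
    (Z : Ω → ℝ) (hZ : Integrable Z μ) (hub : ∀ f ∈ S, f ≤ᵐ[μ] Z)
    (hdir : ∀ f ∈ S, ∀ g ∈ S, ∃ h ∈ S, f ≤ᵐ[μ] h ∧ g ≤ᵐ[μ] h) :
    ∃ (Y : Ω → ℝ) (f : ℕ → Ω → ℝ), (∀ n, f n ∈ S) ∧
      (∀ᵐ ω ∂μ, Monotone fun n => f n ω) ∧
      (∀ᵐ ω ∂μ, Tendsto (fun n => f n ω) atTop (𝓝 (Y ω))) ∧
      Integrable Y μ ∧ IsEssSupFamily μ S Y := by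
  -- the target sup of integrals
  set I : Set ℝ := (fun f : Ω → ℝ => ∫ ω, f ω ∂μ) '' S with hI
  have hIne : I.Nonempty := hne.image _
  have hIbdd : BddAbove I := by
    refine ⟨∫ ω, Z ω ∂μ, ?_⟩
    rintro y ⟨f, hf, rfl⟩
    exact integral_mono_ae (hint f hf) hZ (hub f hf)
  obtain ⟨u, hu_mono, hu_tendsto, hu_mem⟩ := exists_seq_tendsto_sSup hIne hIbdd
  choose g hgS hgint using hu_mem
  -- build an a.e.-monotone sequence dominating `g`
  have next : ∀ a : {f // f ∈ S}, ∀ b : {f // f ∈ S},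
      ∃ c : {f // f ∈ S}, a.1 ≤ᵐ[μ] c.1 ∧ b.1 ≤ᵐ[μ] c.1 := by
    rintro ⟨a, ha⟩ ⟨b, hb⟩
    obtain ⟨c, hc, h1, h2⟩ := hdir a ha b hb
    exact ⟨⟨c, hc⟩, h1, h2⟩
  let F : ℕ → {f // f ∈ S} := fun n => Nat.rec ⟨g 0, hgS 0⟩
    (fun n a => (next a ⟨g (n+1), hgS (n+1)⟩).choose) n
  set f : ℕ → Ω → ℝ := fun n => (F n).1 with hf
  have hfS : ∀ n, f n ∈ S := fun n => (F n).2
  have hf0 : f 0 = g 0 := rfl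
  have hstep : ∀ n, f n ≤ᵐ[μ] f (n+1) ∧ g (n+1) ≤ᵐ[μ] f (n+1) := fun n =>
    (next (F n) ⟨g (n+1), hgS (n+1)⟩).choose_spec
  have hgf : ∀ n, g n ≤ᵐ[μ] f n := by
    intro n
    cases n with
    | zero => exact EventuallyEq.le (by rw [hf0])
    | succ n => exact (hstep n).2
  -- the a.e. good set
  have hmono : ∀ᵐ ω ∂μ, Monotone fun n => f n ω := by
    have : ∀ᵐ ω ∂μ, ∀ n, f n ω ≤ f (n+1) ω := ae_all_iff.2 fun n => (hstep n).1
    filter_upwards [this] with ω hω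
    exact monotone_nat_of_le_succ hω
  have hfZ : ∀ᵐ ω ∂μ, ∀ n, f n ω ≤ Z ω := ae_all_iff.2 fun n => hub _ (hfS n)
  classical
  set Y : Ω → ℝ := fun ω =>
    if h : BddAbove (Set.range fun n => f n ω) then ⨆ n, f n ω else 0 with hY
  have htend : ∀ᵐ ω ∂μ, Tendsto (fun n => f n ω) atTop (𝓝 (Y ω)) := by
    filter_upwards [hmono, hfZ] with ω hm hz
    have hbdd : BddAbove (Set.range fun n => f n ω) := ⟨Z ω, by rintro y ⟨n, rfl⟩; exact hz n⟩
    rw [hY]; simp only [hbdd, dif_pos]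
    exact tendsto_atTop_ciSup hm hbdd
  have hYmeas : AEStronglyMeasurable Y μ :=
    aestronglyMeasurable_of_tendsto_ae atTop (fun n => (hint _ (hfS n)).1) htend
  have hYint : Integrable Y μ := by
    refine Integrable.mono' (((hint _ (hfS 0)).abs).add hZ.abs) hYmeas ?_
    filter_upwards [hmono, hfZ, htend] with ω hm hz ht
    have h1 : f 0 ω ≤ Y ω := ge_of_tendsto' ht (fun n => hm (Nat.zero_le n))
    have h2 : Y ω ≤ Z ω := le_of_tendsto' ht (fun n => hz n)
    rw [Real.norm_eq_abs, abs_le]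
    constructor
    · calc -(|f 0 ω| + |Z ω|) ≤ -(|f 0 ω|) := by nlinarith [abs_nonneg (Z ω)]
        _ ≤ f 0 ω := neg_abs_le _
        _ ≤ Y ω := h1
    · calc Y ω ≤ Z ω := h2
        _ ≤ |Z ω| := le_abs_self _
        _ ≤ |f 0 ω| + |Z ω| := by nlinarith [abs_nonneg (f 0 ω)]
  have hint_tendsto : Tendsto (fun n => ∫ ω, f n ω ∂μ) atTop (𝓝 (∫ ω, Y ω ∂μ)) :=
    integral_tendsto_of_tendsto_of_monotone (fun n => hint _ (hfS n)) hYint hmono htend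
  have hfle_sSup : ∀ n, ∫ ω, f n ω ∂μ ≤ sSup I := fun n =>
    le_csSup hIbdd ⟨f n, hfS n, rfl⟩
  have hufn : ∀ n, u n ≤ ∫ ω, f n ω ∂μ := by
    intro n
    rw [← hgint n]
    exact integral_mono_ae (hint _ (hgS n)) (hint _ (hfS n)) (hgf n)
  have hYI : ∫ ω, Y ω ∂μ = sSup I := by
    have h1 : ∫ ω, Y ω ∂μ ≤ sSup I := le_of_tendsto' hint_tendsto hfle_sSup
    have h2 : sSup I ≤ ∫ ω, Y ω ∂μ := le_of_tendsto_of_tendsto' hu_tendsto hint_tendsto hufn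
    linarith
  refine ⟨Y, f, hfS, hmono, htend, hYint, ?_, ?_⟩
  · -- upper bound property
    intro f' hf'
    choose e heS he1 he2 using fun n => hdir f' hf' (f n) (hfS n)
    set M : Ω → ℝ := fun ω => max (f' ω) (Y ω) with hM
    have hMint : Integrable M μ := (hint f' hf').sup hYint
    have hmn_int : ∀ n, Integrable (fun ω => max (f' ω) (f n ω)) μ :=
      fun n => (hint f' hf').sup (hint _ (hfS n))
    have hmn_mono : ∀ᵐ ω ∂μ, Monotone fun n => max (f' ω) (f n ω) := by
      filter_upwards [hmono] with ω hm
      exact fun a b hab => max_le_max le_rfl (hm hab)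
    have hmn_tend : ∀ᵐ ω ∂μ, Tendsto (fun n => max (f' ω) (f n ω)) atTop (𝓝 (M ω)) := by
      filter_upwards [htend] with ω ht
      exact (tendsto_const_nhds.max ht)
    have hmle : ∀ n, ∫ ω, max (f' ω) (f n ω) ∂μ ≤ sSup I := by
      intro n
      refine le_trans (integral_mono_ae (hmn_int n) (hint _ (heS n)) ?_)
        (le_csSup hIbdd ⟨e n, heS n, rfl⟩)
      filter_upwards [he1 n, he2 n] with ω h1 h2
      exact max_le h1 h2
    have hMI : ∫ ω, M ω ∂μ ≤ sSup I :=
      le_of_tendsto'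
        (integral_tendsto_of_tendsto_of_monotone hmn_int hMint hmn_mono hmn_tend) hmle
    have hYM : Y ≤ M := fun ω => le_max_right _ _
    have h0 : (fun ω => M ω - Y ω) =ᵐ[μ] 0 := by
      rw [← integral_eq_zero_iff_of_nonneg_ae
        (Eventually.of_forall fun ω => sub_nonneg.2 (hYM ω)) (hMint.sub hYint)]
      rw [integral_sub hMint hYint]
      have hge : ∫ ω, Y ω ∂μ ≤ ∫ ω, M ω ∂μ :=
        integral_mono hYint hMint hYM
      have := hYI
      linarith [hMI]
    filter_upwards [h0] with ω hω
    have : M ω = Y ω := by simpa [sub_eq_zero] using hω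
    calc f' ω ≤ M ω := le_max_left _ _
      _ = Y ω := this
  · -- minimality
    intro Z' hZ'
    have : ∀ᵐ ω ∂μ, ∀ n, f n ω ≤ Z' ω := ae_all_iff.2 fun n => hZ' _ (hfS n)
    filter_upwards [this, htend] with ω hle ht
    exact le_of_tendsto' ht hle


/-- **Representation of the parameterized Snell envelope after the exercise time.**
Suppose `1 < k ≤ L + 1` and the chain `j 1 ≤ ... ≤ j (k-1)` satisfies the constraints
(`C_{k-1}(j 1, ..., j (k-1)) = 1`). Then for every `r > j (k-1)`, almost surely
`Y*_r^{L-k+1, j 1, ..., j (k-1)} = ∑_{p=1}^{k-1} U p (j p) ∏_{l=1}^{p-1} V l (j l)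
  + E[ Y*_{ρ (j (k-1)) ∨ r}^{L-k+1} | ℱ r ] ⬝ ∏_{l=1}^{k-1} V l (j l)`. -/
theorem parameterized_snell_after_exercise_time
    (T L : ℕ) (μ : Measure Ω) [IsProbabilityMeasure μ] (ℱ : Filtration ℕ m0)
    (U V : ℕ → ℕ → Ω → ℝ) (v ρ : ℕ → Ω → ℕ)
    (hL : 1 ≤ L)
    (hU : ∀ p i, 1 ≤ p → p ≤ L → i ≤ T + 1 →
      StronglyMeasurable[ℱ i] (U p i) ∧ Integrable (U p i) μ)
    (hV : ∀ l i, 1 ≤ l → l ≤ L - 1 → i ≤ T + 1 →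
      StronglyMeasurable[ℱ i] (V l i) ∧ (∀ ω, 0 < V l i ω) ∧ ∃ c : ℝ, ∀ ω, V l i ω ≤ c)
    (hvad : ∀ i, i ≤ T + 1 → Measurable[ℱ i] (v i))
    (hvb : ∀ i ω, i ≤ T + 1 → 1 ≤ v i ω ∧ v i ω ≤ L)
    (hvT : ∀ ω, v (T + 1) ω = L)
    (hρ : ∀ i, i ≤ T → IsStoppingTime ℱ (fun ω => ((ρ i ω : ℕ) : WithTop ℕ)) ∧ ∀ ω, i + 1 ≤ ρ i ω ∧ ρ i ω ≤ T + 1)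
    -- `Ystar k r` is the auxiliary Snell envelope `Y*_r^{L-k+1}`
    (Ystar : ℕ → ℕ → Ω → ℝ)
    (hY : ∀ k r, 1 ≤ k → k ≤ L → r ≤ T + 1 →
      IsEssSupFamily μ (auxFamily T L μ ℱ U V v ρ k r) (Ystar k r))
    (hY0 : ∀ r, Ystar (L + 1) r = 0)
    -- `Ypar k r j` is the parameterized Snell envelope `Y*_r^{L-k+1, j 1, ..., j (k-1)}`
    (Ypar : ℕ → ℕ → (ℕ → ℕ) → Ω → ℝ)
    (hYpar : ∀ k r (j : ℕ → ℕ), 1 ≤ k → k ≤ L → DetChain (k - 1) (T + 1) j →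
      (∀ p, 1 ≤ p → p ≤ k - 1 → j p ≤ r) → r ≤ T + 1 →
      IsEssSupFamily μ (parFamily T L μ ℱ U V v ρ k r j) (Ypar k r j))
    -- the convention `Y*_r^{0, j 1, ..., j L} = X_{j 1, ..., j L}`
    (hYpar0 : ∀ r (j : ℕ → ℕ), Ypar (L + 1) r j =
      fun ω => ∑ p ∈ Finset.Icc 1 L, U p (j p) ω * ∏ l ∈ Finset.Ico 1 p, V l (j l) ω)
    (k : ℕ) (hk1 : 1 < k) (hkL : k ≤ L + 1)
    (j : ℕ → ℕ) (hj : DetChain (k - 1) (T + 1) j)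
    (hC : ∀ ω, SatCons v ρ 1 (k - 1) j ω)
    (r : ℕ) (hjr : j (k - 1) < r) (hr : r ≤ T + 1) :
    Ypar k r j =ᵐ[μ]
      fun ω => (∑ p ∈ Finset.Icc 1 (k - 1),
          U p (j p) ω * ∏ l ∈ Finset.Ico 1 p, V l (j l) ω)
        + (μ[(fun ω' => Ystar k (max (ρ (j (k - 1)) ω') r) ω')|ℱ r]) ω
            * ∏ l ∈ Finset.Icc 1 (k - 1), V l (j l) ω := by
  classical
  by_cases hkeq : k = L + 1
  · -- trivial case `k = L + 1`: no stopping times left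
    subst hkeq
    rw [hYpar0]
    have hz : (fun ω' => Ystar (L + 1) (max (ρ (j (L + 1 - 1)) ω') r) ω') = (fun _ : Ω => (0 : ℝ)) := by
      funext ω'
      rw [hY0]
      rfl
    have h0 : μ[(fun _ : Ω => (0 : ℝ))|ℱ r] = 0 := condExp_zero
    rw [hz, h0]
    refine Eventually.of_forall fun ω => ?_
    simp only [Nat.add_sub_cancel, Pi.zero_apply, zero_mul, add_zero]
  have hk2 : k ≤ L := by omega
  have hjkT : j (k - 1) ≤ T := by omega
  obtain ⟨hρst, hρb⟩ := hρ (j (k - 1)) hjkT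
  set σ : Ω → ℕ := fun ω => max (ρ (j (k - 1)) ω) r with hσdef
  have hσr : ∀ ω, r ≤ σ ω := fun ω => le_max_right _ _
  have hσT : ∀ ω, σ ω ≤ T + 1 := fun ω => max_le (hρb ω).2 hr
  have hσmeas : ∀ s, MeasurableSet[ℱ s] {ω | σ ω = s} := by
    intro s
    rcases lt_trichotomy s r with hsr | hsr | hsr
    · have he : {ω | σ ω = s} = ∅ := by
        ext ω
        simp only [Set.mem_setOf_eq, Set.mem_empty_iff_false, iff_false]
        intro h
        have := hσr ω
        omega
      rw [he]
      exact @MeasurableSet.empty _ (ℱ s)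
    · have he : {ω | σ ω = s} = {ω | ρ (j (k - 1)) ω ≤ r} := by
        ext ω
        simp only [Set.mem_setOf_eq, hσdef]
        omega
      rw [he]
      exact ℱ.mono (le_of_eq hsr.symm) _ (stopping_nat_le hρst r)
    · have he : {ω | σ ω = s} = {ω | ρ (j (k - 1)) ω = s} := by
        ext ω
        simp only [Set.mem_setOf_eq, hσdef]
        omega
      rw [he]
      exact by simpa using hρst.measurableSet_eq s
  have hσm0 : Measurable σ := (hρst.measurable_nat).max measurable_const
  -- bounds for V
  have hVb : ∀ l i, ∃ c : ℝ, 1 ≤ l → l ≤ L - 1 → i ≤ T + 1 → ∀ ω, V l i ω ≤ c := by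
    intro l i
    by_cases h : 1 ≤ l ∧ l ≤ L - 1 ∧ i ≤ T + 1
    · obtain ⟨c, hc⟩ := (hV l i h.1 h.2.1 h.2.2).2.2
      exact ⟨c, fun _ _ _ => hc⟩
    · exact ⟨0, fun h1 h2 h3 => absurd ⟨h1, h2, h3⟩ h⟩
  choose B hB using hVb
  set D : ℕ → ℝ := fun l => 1 + ∑ i ∈ Finset.range (T + 2), |B l i| with hDdef
  have hD1 : ∀ l, 1 ≤ D l := fun l =>
    le_add_of_nonneg_right (Finset.sum_nonneg fun _ _ => abs_nonneg _)
  have hVD : ∀ l i ω, 1 ≤ l → l ≤ L - 1 → i ≤ T + 1 → 0 ≤ V l i ω ∧ V l i ω ≤ D l := by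
    intro l i ω h1 h2 h3
    refine ⟨le_of_lt ((hV l i h1 h2 h3).2.1 ω), ?_⟩
    calc V l i ω ≤ B l i := hB l i h1 h2 h3 ω
      _ ≤ |B l i| := le_abs_self _
      _ ≤ ∑ i' ∈ Finset.range (T + 2), |B l i'| :=
          Finset.single_le_sum (f := fun i1 => |B l i1|) (fun _ _ => abs_nonneg _) (Finset.mem_range.2 (show i < T + 2 by omega))
      _ ≤ D l := by rw [hDdef]; simp only []; linarith
  have hV0k : ∀ l i ω, k ≤ l → l < L → i ≤ T + 1 → 0 ≤ V l i ω ∧ V l i ω ≤ D l :=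
    fun l i ω h1 h2 h3 => hVD l i ω (by omega) (by omega) h3
  -- measurability and integrability of the coefficients
  have hUint : ∀ p i, 1 ≤ p → p ≤ L → i ≤ T + 1 → Integrable (U p i) μ :=
    fun p i h1 h2 h3 => (hU p i h1 h2 h3).2
  have hUm : ∀ p i, 1 ≤ p → p ≤ L → i ≤ T + 1 → Measurable (U p i) :=
    fun p i h1 h2 h3 => ((hU p i h1 h2 h3).1.measurable).mono (ℱ.le i) le_rfl
  have hVm : ∀ l i, 1 ≤ l → l ≤ L - 1 → i ≤ T + 1 → Measurable (V l i) :=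
    fun l i h1 h2 h3 => ((hV l i h1 h2 h3).1.measurable).mono (ℱ.le i) le_rfl
  have hUmk : ∀ p i, k ≤ p → p ≤ L → i ≤ T + 1 → Measurable (U p i) :=
    fun p i h1 h2 h3 => hUm p i (by omega) h2 h3
  have hVmk : ∀ l i, k ≤ l → l < L → i ≤ T + 1 → Measurable (V l i) :=
    fun l i h1 h2 h3 => hVm l i (by omega) (by omega) h3
  have hUintk : ∀ p i, k ≤ p → p ≤ L → i ≤ T + 1 → Integrable (U p i) μ :=
    fun p i h1 h2 h3 => hUint p i (by omega) h2 h3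
  -- the dominating function
  set M : Ω → ℝ := fun ω => ∑ p ∈ Finset.Icc k L,
      (∑ i ∈ Finset.range (T + 2), |U p i ω|) * ∏ l ∈ Finset.Ico k L, D l with hMdef
  have hMint : Integrable M μ := by
    refine integrable_finset_sum _ fun p hp => ?_
    obtain ⟨h1, h2⟩ := Finset.mem_Icc.1 hp
    refine Integrable.mul_const ?_ _
    refine integrable_finset_sum _ fun i hi => ?_
    exact (hUint p i (by omega) h2 (Nat.lt_succ_iff.1 (Finset.mem_range.1 hi))).abs
  -- facts about the deterministic head
  have hjle : ∀ p, 1 ≤ p → p ≤ k - 1 → j p ≤ j (k - 1) :=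
    fun p h1 h2 => hj.mono_le h1 h2 le_rfl
  have hjr' : ∀ p, 1 ≤ p → p ≤ k - 1 → j p < r :=
    fun p h1 h2 => lt_of_le_of_lt (hjle p h1 h2) hjr
  have hjT : ∀ p, 1 ≤ p → p ≤ k - 1 → j p ≤ T + 1 := hj.2
  have hAsm : StronglyMeasurable[ℱ r] (headPay U V k j) := by
    refine Measurable.stronglyMeasurable ?_
    refine Finset.measurable_sum _ fun p hp => ?_
    obtain ⟨h1, h2⟩ := Finset.mem_Icc.1 hp
    refine Measurable.mul ?_ ?_
    · exact ((hU p (j p) h1 (by omega) (hjT p h1 h2)).1.measurable).mono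
        (ℱ.mono (le_of_lt (hjr' p h1 h2))) le_rfl
    · refine Finset.measurable_prod _ fun l hl => ?_
      obtain ⟨h3, h4⟩ := Finset.mem_Ico.1 hl
      exact ((hV l (j l) h3 (by omega) (hjT l h3 (by omega))).1.measurable).mono
        (ℱ.mono (le_of_lt (hjr' l h3 (by omega)))) le_rfl
  have hAint : Integrable (headPay U V k j) μ := by
    refine integrable_finset_sum _ fun p hp => ?_
    obtain ⟨h1, h2⟩ := Finset.mem_Icc.1 hp
    have hprod_m : Measurable fun ω => ∏ l ∈ Finset.Ico 1 p, V l (j l) ω := by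
      refine Finset.measurable_prod _ fun l hl => ?_
      obtain ⟨h3, h4⟩ := Finset.mem_Ico.1 hl
      exact hVm l (j l) h3 (by omega) (hjT l h3 (by omega))
    have hbase : Integrable (fun ω =>
        (∏ l ∈ Finset.Ico 1 p, V l (j l) ω) * U p (j p) ω) μ := by
      refine (hUint p (j p) h1 (by omega) (hjT p h1 h2)).bdd_mul
        (c := ∏ l ∈ Finset.Ico 1 p, D l) hprod_m.aestronglyMeasurable ?_
      refine Eventually.of_forall fun ω => ?_
      rw [Real.norm_eq_abs]
      have h0 : ∀ l ∈ Finset.Ico 1 p, 0 ≤ V l (j l) ω ∧ V l (j l) ω ≤ D l := by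
        intro l hl
        obtain ⟨h3, h4⟩ := Finset.mem_Ico.1 hl
        exact hVD l (j l) ω h3 (by omega) (hjT l h3 (by omega))
      rw [abs_of_nonneg (Finset.prod_nonneg fun l hl => (h0 l hl).1)]
      exact Finset.prod_le_prod (fun l hl => (h0 l hl).1) (fun l hl => (h0 l hl).2)
    exact hbase.congr (Eventually.of_forall fun ω => mul_comm _ _)
  have hPsm : StronglyMeasurable[ℱ r] (headProd V k j) := by
    refine Measurable.stronglyMeasurable ?_
    refine Finset.measurable_prod _ fun l hl => ?_
    obtain ⟨h3, h4⟩ := Finset.mem_Icc.1 hl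
    exact ((hV l (j l) h3 (by omega) (hjT l h3 h4)).1.measurable).mono
      (ℱ.mono (le_of_lt (hjr' l h3 h4))) le_rfl
  have hPm0 : Measurable (headProd V k j) := hPsm.measurable.mono (ℱ.le r) le_rfl
  have hP0 : ∀ ω, 0 ≤ headProd V k j ω := by
    intro ω
    refine Finset.prod_nonneg fun l hl => ?_
    obtain ⟨h3, h4⟩ := Finset.mem_Icc.1 hl
    exact (hVD l (j l) ω h3 (by omega) (hjT l h3 h4)).1
  have hPbd : ∀ ω, headProd V k j ω ≤ ∏ l ∈ Finset.Icc 1 (k - 1), D l := by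
    intro ω
    refine Finset.prod_le_prod (fun l hl => ?_) (fun l hl => ?_) <;>
      obtain ⟨h3, h4⟩ := Finset.mem_Icc.1 hl
    · exact (hVD l (j l) ω h3 (by omega) (hjT l h3 h4)).1
    · exact (hVD l (j l) ω h3 (by omega) (hjT l h3 h4)).2
  -- facts about feasible stopping chains
  have hWfacts : ∀ τ : ℕ → Ω → ℕ, (∀ p, k ≤ p → p ≤ L → Measurable (τ p)) →
      (∀ p, k ≤ p → p ≤ L → ∀ ω, τ p ω ≤ T + 1) →
      Integrable (tailPay U V k L τ) μ ∧ ∀ ω, tailPay U V k L τ ω ≤ M ω := by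
    intro τ hm hb
    refine ⟨tailPay_integrable hD1 hV0k hUintk hUmk hVmk hm hb, fun ω => ?_⟩
    exact le_trans (le_abs_self _) (payoff_abs_le U V k L T D hD1 hV0k τ hb ω)
  have hPW : ∀ W : Ω → ℝ, Integrable W μ → Integrable (fun ω => headProd V k j ω * W ω) μ := by
    intro W hW
    refine hW.bdd_mul (c := ∏ l ∈ Finset.Icc 1 (k - 1), D l) hPm0.aestronglyMeasurable (Eventually.of_forall fun ω => ?_)
    rw [Real.norm_eq_abs, abs_of_nonneg (hP0 ω)]
    exact hPbd ω
  -- the conditional expectation splitting of a mixed chain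
  have hsplit : ∀ τ : ℕ → Ω → ℕ, (∀ p, k ≤ p → p ≤ L → Measurable (τ p)) →
      (∀ p, k ≤ p → p ≤ L → ∀ ω, τ p ω ≤ T + 1) →
      μ[(fun ω => ∑ p ∈ Finset.Icc 1 L, U p (if p < k then j p else τ p ω) ω *
          ∏ l ∈ Finset.Ico 1 p, V l (if l < k then j l else τ l ω) ω)|ℱ r]
        =ᵐ[μ] fun ω => headPay U V k j ω
          + headProd V k j ω * (μ[tailPay U V k L τ|ℱ r]) ω := by
    intro τ hm hb
    obtain ⟨hWint, _⟩ := hWfacts τ hm hb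
    have hPWint := hPW _ hWint
    rw [mixPay_split U V k L (by omega) hkL j τ]
    have hadd : μ[(fun ω => headPay U V k j ω + headProd V k j ω * tailPay U V k L τ ω)|ℱ r]
        =ᵐ[μ] μ[headPay U V k j|ℱ r] + μ[(fun ω => headProd V k j ω * tailPay U V k L τ ω)|ℱ r] :=
      condExp_add hAint hPWint _
    refine hadd.trans ?_
    have h1 : μ[headPay U V k j|ℱ r] = headPay U V k j :=
      condExp_of_stronglyMeasurable (ℱ.le r) hAsm hAint
    have h2 : μ[(fun ω => headProd V k j ω * tailPay U V k L τ ω)|ℱ r]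
        =ᵐ[μ] fun ω => headProd V k j ω * (μ[tailPay U V k L τ|ℱ r]) ω :=
      condExp_mul_of_stronglyMeasurable_left hPsm hPWint hWint
    filter_upwards [h2] with ω h2ω
    simp only [Pi.add_apply, h1, h2ω]
  -- generic facts about members of the auxiliary families
  have hfam_facts : ∀ τ : ℕ → Ω → ℕ, (∀ p, IsStoppingTime ℱ (fun ω => ((τ p ω : ℕ) : WithTop ℕ))) →
      (∀ p, k ≤ p → p < L → ∀ ω, τ p ω ≤ τ (p + 1) ω) → (∀ ω, τ L ω ≤ T + 1) →
      (∀ p, k ≤ p → p ≤ L → Measurable (τ p)) ∧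
      (∀ p, k ≤ p → p ≤ L → ∀ ω, τ p ω ≤ T + 1) :=
    fun τ hst hm hL' => ⟨fun p _ _ => (hst p).measurable_nat,
      fun p hp1 hp2 ω => le_trans (chain_mono_le hm hp1 hp2 le_rfl ω) (hL' ω)⟩
  set Fam : ℕ → Set (Ω → ℝ) := fun s => auxFamily T L μ ℱ U V v ρ k s with hFam
  have hFam_int : ∀ s, ∀ f ∈ Fam s, Integrable f μ := by
    rintro s f ⟨τ, hst, hk', hm', hL', hsat', rfl⟩
    exact integrable_condExp
  have hconst_mem : ∀ s, s ≤ T + 1 →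
      μ[tailPay U V k L (fun _ _ => T + 1)|ℱ s] ∈ Fam s := by
    intro s h2
    exact ⟨fun _ _ => T + 1, fun p => isStoppingTime_const ℱ (T + 1), fun ω => h2,
      fun _ _ _ _ => le_rfl, fun ω => le_rfl,
      fun ω => satCons_const (hvT ω) (by omega) le_rfl, rfl⟩
  have hub : ∀ s, ∀ f ∈ Fam s, f ≤ᵐ[μ] μ[M|ℱ s] := by
    rintro s f ⟨τ, hst, hk', hm', hL', hsat', rfl⟩
    obtain ⟨hτm, hτb⟩ := hfam_facts τ hst hm' hL'
    obtain ⟨hWint, hWle⟩ := hWfacts τ hτm hτb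
    exact condExp_mono hWint hMint (Eventually.of_forall hWle)
  -- the auxiliary families are upward directed
  have hdir : ∀ s, s ≤ T + 1 → ∀ f ∈ Fam s, ∀ g ∈ Fam s,
      ∃ h ∈ Fam s, f ≤ᵐ[μ] h ∧ g ≤ᵐ[μ] h := by
    intro s hsT' f hf g hg
    obtain ⟨τ1, h1st, h1k, h1m, h1L, h1sat, rfl⟩ := hf
    obtain ⟨τ2, h2st, h2k, h2m, h2L, h2sat, rfl⟩ := hg
    obtain ⟨hτ1m, hτ1b⟩ := hfam_facts τ1 h1st h1m h1L
    obtain ⟨hτ2m, hτ2b⟩ := hfam_facts τ2 h2st h2m h2L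
    obtain ⟨hW1int, _⟩ := hWfacts τ1 hτ1m hτ1b
    obtain ⟨hW2int, _⟩ := hWfacts τ2 hτ2m hτ2b
    set A0 : Set Ω := {ω | (μ[tailPay U V k L τ1|ℱ s]) ω ≤ (μ[tailPay U V k L τ2|ℱ s]) ω}
      with hA0def
    have hA0m : MeasurableSet[ℱ s] A0 :=
      measurableSet_le stronglyMeasurable_condExp.measurable
        stronglyMeasurable_condExp.measurable
    set τ3 : ℕ → Ω → ℕ :=
      fun p ω => if k ≤ p ∧ p ≤ L then (if ω ∈ A0 then τ2 p ω else τ1 p ω) else T + 1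
      with hτ3def
    have hτ3eq : ∀ p ω, k ≤ p → p ≤ L → τ3 p ω = if ω ∈ A0 then τ2 p ω else τ1 p ω := by
      intro p ω hp1 hp2
      rw [hτ3def]
      exact if_pos ⟨hp1, hp2⟩
    have hge1 : ∀ p, k ≤ p → p ≤ L → ∀ ω, s ≤ τ1 p ω :=
      fun p hp1 hp2 ω => le_trans (h1k ω) (chain_mono_le h1m le_rfl hp1 hp2 ω)
    have hge2 : ∀ p, k ≤ p → p ≤ L → ∀ ω, s ≤ τ2 p ω :=
      fun p hp1 hp2 ω => le_trans (h2k ω) (chain_mono_le h2m le_rfl hp1 hp2 ω)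
    have hst3 : ∀ p, IsStoppingTime ℱ (fun ω => ((τ3 p ω : ℕ) : WithTop ℕ)) := by
      intro p
      by_cases hp : k ≤ p ∧ p ≤ L
      · have he : τ3 p = fun ω => if ω ∈ A0 then τ2 p ω else τ1 p ω := by
          funext ω
          exact hτ3eq p ω hp.1 hp.2
        rw [he]
        exact paste2_isStoppingTime s A0 hA0m (h2st p) (h1st p)
          (hge2 p hp.1 hp.2) (hge1 p hp.1 hp.2)
      · have he : τ3 p = fun _ => T + 1 := by
          funext ω
          rw [hτ3def]
          exact if_neg hp
        rw [he]
        exact isStoppingTime_const ℱ (T + 1)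
    have hmem3 : μ[tailPay U V k L τ3|ℱ s] ∈ Fam s := by
      refine ⟨τ3, hst3, ?_, ?_, ?_, ?_, rfl⟩
      · intro ω
        rw [hτ3eq k ω le_rfl hk2]
        by_cases hω : ω ∈ A0
        · rw [if_pos hω]; exact h2k ω
        · rw [if_neg hω]; exact h1k ω
      · intro p hp1 hp2 ω
        rw [hτ3eq p ω hp1 (by omega), hτ3eq (p + 1) ω (by omega) (by omega)]
        by_cases hω : ω ∈ A0
        · rw [if_pos hω, if_pos hω]; exact h2m p hp1 hp2 ω
        · rw [if_neg hω, if_neg hω]; exact h1m p hp1 hp2 ω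
      · intro ω
        rw [hτ3eq L ω hk2 le_rfl]
        by_cases hω : ω ∈ A0
        · rw [if_pos hω]; exact h2L ω
        · rw [if_neg hω]; exact h1L ω
      · intro ω
        by_cases hω : ω ∈ A0
        · refine SatCons_congr (fun p hp1 hp2 => ?_) hk2 (h2sat ω)
          rw [hτ3eq p ω hp1 hp2, if_pos hω]
        · refine SatCons_congr (fun p hp1 hp2 => ?_) hk2 (h1sat ω)
          rw [hτ3eq p ω hp1 hp2, if_neg hω]
    have hW3 : ∀ ω, tailPay U V k L τ3 ω
        = A0.indicator (tailPay U V k L τ2) ω + A0ᶜ.indicator (tailPay U V k L τ1) ω := by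
      intro ω
      by_cases hω : ω ∈ A0
      · rw [Set.indicator_of_mem hω, Set.indicator_of_notMem (by simp [hω]), add_zero]
        exact tailPay_congr fun p h1 h2 => by rw [hτ3eq p ω h1 h2, if_pos hω]
      · rw [Set.indicator_of_notMem hω, Set.indicator_of_mem (by simp [hω]), zero_add]
        exact tailPay_congr fun p h1 h2 => by rw [hτ3eq p ω h1 h2, if_neg hω]
    have hA0m0 : MeasurableSet A0 := ℱ.le s _ hA0m
    have hcond3 : μ[tailPay U V k L τ3|ℱ s] =ᵐ[μ] fun ω =>
        A0.indicator (μ[tailPay U V k L τ2|ℱ s]) ω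
          + A0ᶜ.indicator (μ[tailPay U V k L τ1|ℱ s]) ω := by
      have e1 : μ[tailPay U V k L τ3|ℱ s] =ᵐ[μ] μ[(fun ω =>
          A0.indicator (tailPay U V k L τ2) ω + A0ᶜ.indicator (tailPay U V k L τ1) ω)|ℱ s] :=
        condExp_congr_ae (Eventually.of_forall hW3)
      have e2 : μ[(fun ω => A0.indicator (tailPay U V k L τ2) ω
            + A0ᶜ.indicator (tailPay U V k L τ1) ω)|ℱ s]
          =ᵐ[μ] μ[A0.indicator (tailPay U V k L τ2)|ℱ s]
            + μ[A0ᶜ.indicator (tailPay U V k L τ1)|ℱ s] :=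
        condExp_add (hW2int.indicator hA0m0) (hW1int.indicator hA0m0.compl) _
      have e3 : μ[A0.indicator (tailPay U V k L τ2)|ℱ s]
          =ᵐ[μ] A0.indicator (μ[tailPay U V k L τ2|ℱ s]) := condExp_indicator hW2int hA0m
      have e4 : μ[A0ᶜ.indicator (tailPay U V k L τ1)|ℱ s]
          =ᵐ[μ] A0ᶜ.indicator (μ[tailPay U V k L τ1|ℱ s]) :=
        condExp_indicator hW1int hA0m.compl
      refine (e1.trans e2).trans ?_
      filter_upwards [e3, e4] with ω he3 he4
      simp only [Pi.add_apply, he3, he4]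
    refine ⟨μ[tailPay U V k L τ3|ℱ s], hmem3, ?_, ?_⟩
    · filter_upwards [hcond3] with ω hω
      rw [hω]
      by_cases hm : ω ∈ A0
      · rw [Set.indicator_of_mem hm, Set.indicator_of_notMem (by simp [hm]), add_zero]
        exact hm
      · rw [Set.indicator_of_notMem hm, Set.indicator_of_mem (by simp [hm]), zero_add]
        exact le_rfl
    · filter_upwards [hcond3] with ω hω
      rw [hω]
      by_cases hm : ω ∈ A0
      · rw [Set.indicator_of_mem hm, Set.indicator_of_notMem (by simp [hm]), add_zero]
        exact le_rfl
      · rw [Set.indicator_of_notMem hm, Set.indicator_of_mem (by simp [hm]), zero_add]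
        exact le_of_not_ge hm
  -- measurable versions of the auxiliary Snell envelopes with approximating sequences
  have hSdata : ∀ s : ℕ, ∃ (Y : Ω → ℝ) (fseq : ℕ → Ω → ℝ), r ≤ s → s ≤ T + 1 →
      (∀ n, fseq n ∈ Fam s) ∧
      (∀ᵐ ω ∂μ, Monotone fun n => fseq n ω) ∧
      (∀ᵐ ω ∂μ, Tendsto (fun n => fseq n ω) atTop (𝓝 (Y ω))) ∧
      Integrable Y μ ∧ IsEssSupFamily μ (Fam s) Y := by
    intro s
    by_cases hs : r ≤ s ∧ s ≤ T + 1
    · obtain ⟨Y, fseq, h1, h2, h3, h4, h5⟩ :=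
        exists_essSupFamily μ (Fam s) ⟨_, hconst_mem s hs.2⟩ (hFam_int s)
          (μ[M|ℱ s]) integrable_condExp (hub s) (hdir s hs.2)
      exact ⟨Y, fseq, fun _ _ => ⟨h1, h2, h3, h4, h5⟩⟩
    · exact ⟨0, fun _ => 0, fun h1 h2 => absurd ⟨h1, h2⟩ hs⟩
  choose Ys fseq hYsdata using hSdata
  have hYs_ae : ∀ s, r ≤ s → s ≤ T + 1 → Ystar k s =ᵐ[μ] Ys s := by
    intro s h1 h2
    have hess := (hYsdata s h1 h2).2.2.2.2
    have hess' := hY k s (by omega) hk2 h2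
    exact ((hess'.2 (Ys s) hess.1).antisymm (hess.2 (Ystar k s) hess'.1))
  -- the measurable version of `ω ↦ Ys (σ ω) ω`
  set Ybig : Ω → ℝ := fun ω => ∑ s ∈ Finset.Icc r (T + 1),
      ({ω' | σ ω' = s}).indicator (Ys s) ω with hYbigdef
  have hσset : ∀ s, MeasurableSet {ω' | σ ω' = s} := fun s => ℱ.le s _ (hσmeas s)
  have hσmem : ∀ ω, σ ω ∈ Finset.Icc r (T + 1) :=
    fun ω => Finset.mem_Icc.2 ⟨hσr ω, hσT ω⟩
  have hYbigpt : ∀ ω, Ybig ω = Ys (σ ω) ω := by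
    intro ω
    show (∑ s ∈ Finset.Icc r (T + 1), ({ω' | σ ω' = s}).indicator (Ys s) ω) = Ys (σ ω) ω
    rw [Finset.sum_eq_single (σ ω)]
    · exact Set.indicator_of_mem (show ω ∈ {ω' | σ ω' = σ ω} from rfl) _
    · intro s _ hne
      exact Set.indicator_of_notMem (fun h => hne (by exact h.symm ▸ rfl)) _
    · intro h
      exact absurd (hσmem ω) h
  have hYsint : ∀ s, r ≤ s → s ≤ T + 1 → Integrable (Ys s) μ :=
    fun s h1 h2 => (hYsdata s h1 h2).2.2.2.1
  have hYbigint : Integrable Ybig μ := by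
    refine integrable_finset_sum _ fun s hs => ?_
    obtain ⟨h1, h2⟩ := Finset.mem_Icc.1 hs
    exact (hYsint s h1 h2).indicator (hσset s)
  have hRHSae : (fun ω' => Ystar k (max (ρ (j (k - 1)) ω') r) ω') =ᵐ[μ] Ybig := by
    have hall : ∀ᵐ ω ∂μ, ∀ s ∈ Finset.Icc r (T + 1), Ystar k s ω = Ys s ω := by
      refine (eventually_all_finset _).2 fun s hs => ?_
      obtain ⟨h1, h2⟩ := Finset.mem_Icc.1 hs
      exact hYs_ae s h1 h2
    filter_upwards [hall] with ω h
    rw [hYbigpt ω]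
    exact h (σ ω) (hσmem ω)
  have hcond_congr : μ[(fun ω' => Ystar k (max (ρ (j (k - 1)) ω') r) ω')|ℱ r]
      =ᵐ[μ] μ[Ybig|ℱ r] := condExp_congr_ae hRHSae
  -- pushing a conditional expectation through an `{σ = s}`-indicator
  have htower : ∀ s, r ≤ s → ∀ X : Ω → ℝ, Integrable X μ →
      μ[({ω' | σ ω' = s}).indicator X|ℱ r]
        =ᵐ[μ] μ[({ω' | σ ω' = s}).indicator (μ[X|ℱ s])|ℱ r] := by
    intro s h1 X hX
    have e0 : μ[μ[({ω' | σ ω' = s}).indicator X|ℱ s]|ℱ r]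
        =ᵐ[μ] μ[({ω' | σ ω' = s}).indicator X|ℱ r] :=
      condExp_condExp_of_le (ℱ.mono h1) (ℱ.le s)
    have e1 : μ[({ω' | σ ω' = s}).indicator X|ℱ s]
        =ᵐ[μ] ({ω' | σ ω' = s}).indicator (μ[X|ℱ s]) := condExp_indicator hX (hσmeas s)
    exact e0.symm.trans (condExp_congr_ae e1)
  have hcondsum : ∀ F : ℕ → Ω → ℝ, (∀ s ∈ Finset.Icc r (T + 1), Integrable (F s) μ) →
      μ[(fun ω => ∑ s ∈ Finset.Icc r (T + 1), F s ω)|ℱ r]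
        =ᵐ[μ] fun ω => ∑ s ∈ Finset.Icc r (T + 1), (μ[F s|ℱ r]) ω := by
    intro F hint
    have h1 : (fun ω => ∑ s ∈ Finset.Icc r (T + 1), F s ω)
        = ∑ s ∈ Finset.Icc r (T + 1), F s := by
      funext ω
      exact (Finset.sum_apply _ _ _).symm
    rw [h1]
    refine (condExp_finset_sum hint _).trans ?_
    refine Eventually.of_forall fun ω => ?_
    exact Finset.sum_apply _ _ _
  have hYbigcond : μ[Ybig|ℱ r] =ᵐ[μ] fun ω => ∑ s ∈ Finset.Icc r (T + 1),
      (μ[({ω' | σ ω' = s}).indicator (Ys s)|ℱ r]) ω := by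
    refine EventuallyEq.trans ?_ (hcondsum _ fun s hs => ?_)
    · rfl
    · obtain ⟨h1, h2⟩ := Finset.mem_Icc.1 hs
      exact (hYsint s h1 h2).indicator (hσset s)
  -- the candidate function
  set RHS' : Ω → ℝ := fun ω => headPay U V k j ω + headProd V k j ω * (μ[Ybig|ℱ r]) ω
    with hRHSdef
  -- Step 2: `RHS'` dominates the parameterized family
  have hupper : ∀ g ∈ parFamily T L μ ℱ U V v ρ k r j, g ≤ᵐ[μ] RHS' := by
    rintro g ⟨τ, hst, hrk, hmono, hLb, hsat, rfl⟩
    obtain ⟨hτm, hτb⟩ := hfam_facts τ hst hmono hLb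
    have hsplitg := hsplit τ hτm hτb
    -- the bridge and tail constraints
    have hjlek : ∀ ω p, k ≤ p → p ≤ L → j (k - 1) < τ p ω := fun ω p h1 h2 =>
      lt_of_lt_of_le hjr (le_trans (hrk ω) (chain_mono_le hmono le_rfl h1 h2 ω))
    have hbridge : ∀ ω, ρ (j (k - 1)) ω ≤ τ k ω := by
      intro ω
      have h2 := (hsat ω).2 k (by omega) hk2
      beta_reduce at h2
      rw [if_pos (show k - 1 < k by omega), if_neg (show ¬ k < k by omega)] at h2
      exact h2 (hjlek ω k le_rfl hk2)
    have hσleτk : ∀ ω, σ ω ≤ τ k ω := fun ω => max_le (hbridge ω) (hrk ω)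
    have htail : ∀ ω, SatCons v ρ k L (fun p => τ p ω) ω := by
      intro ω
      constructor
      · intro l hkl hlL
        have h0 := (hsat ω).1 l (by omega) hlL
        beta_reduce at h0
        have e : (if l < k then j l else τ l ω) = τ l ω := if_neg (by omega)
        rw [e] at h0
        have h1 : ECount 1 l (fun p => if p < k then j p else τ p ω)
            = ECount k l (fun p => if p < k then j p else τ p ω) := by
          refine ECount_drop (by omega) hkl fun p hp1 hp2 => ?_
          simp only [if_pos hp2, if_neg (show ¬ l < k by omega)]
          exact Nat.ne_of_lt (lt_of_lt_of_le (hjr' p hp1 (by omega))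
            (le_trans (hrk ω) (chain_mono_le hmono le_rfl hkl hlL ω)))
        have h2 : ECount k l (fun p => if p < k then j p else τ p ω)
            = ECount k l (fun p => τ p ω) :=
          ECount_congr k l (fun p hp1 _ => if_neg (by omega)) hkl
        rw [h1, h2] at h0
        exact h0
      · intro l h1 h2 h3
        have h4 := (hsat ω).2 l (by omega) h2
        beta_reduce at h4
        rw [if_neg (show ¬ l - 1 < k by omega), if_neg (show ¬ l < k by omega)] at h4
        exact h4 h3
    -- the pasted chains
    set τs : ℕ → ℕ → Ω → ℕ := fun s p ω =>
      if k ≤ p ∧ p ≤ L then (if σ ω = s then τ p ω else T + 1) else T + 1 with hτsdef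
    have hτseq : ∀ s p ω, k ≤ p → p ≤ L →
        τs s p ω = if σ ω = s then τ p ω else T + 1 := by
      intro s p ω h1 h2
      rw [hτsdef]
      exact if_pos ⟨h1, h2⟩
    have hstτs : ∀ s p, IsStoppingTime ℱ (fun ω => ((τs s p ω : ℕ) : WithTop ℕ)) := by
      intro s p
      by_cases hp : k ≤ p ∧ p ≤ L
      · have he : τs s p = fun ω =>
            (if σ ω = s then τ p else fun _ => T + 1) ω := by
          funext ω
          rw [hτseq s p ω hp.1 hp.2]
          by_cases h : σ ω = s
          · rw [if_pos h, if_pos h]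
          · rw [if_neg h, if_neg h]
        rw [he]
        refine paste_isStoppingTime σ hσmeas
          (fun s' => if s' = s then τ p else fun _ => T + 1) (fun s' => ?_) (fun s' ω hs' => ?_)
        · beta_reduce
          by_cases h : s' = s
          · rw [if_pos h]; exact hst p
          · rw [if_neg h]; exact isStoppingTime_const ℱ (T + 1)
        · beta_reduce
          by_cases h : s' = s
          · rw [if_pos h]
            subst h
            rw [← hs']
            exact le_trans (hσleτk ω) (chain_mono_le hmono le_rfl hp.1 hp.2 ω)
          · rw [if_neg h]
            rw [← hs']
            exact hσT ω
      · have he : τs s p = fun _ => T + 1 := by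
          funext ω
          rw [hτsdef]
          exact if_neg hp
        rw [he]
        exact isStoppingTime_const ℱ (T + 1)
    have hmemτs : ∀ s, r ≤ s → s ≤ T + 1 → μ[tailPay U V k L (τs s)|ℱ s] ∈ Fam s := by
      intro s h1 h2
      refine ⟨τs s, hstτs s, ?_, ?_, ?_, ?_, rfl⟩
      · intro ω
        rw [hτseq s k ω le_rfl hk2]
        by_cases h : σ ω = s
        · rw [if_pos h, ← h]
          exact hσleτk ω
        · rw [if_neg h]
          exact h2
      · intro p hp1 hp2 ω
        rw [hτseq s p ω hp1 (by omega), hτseq s (p + 1) ω (by omega) (by omega)]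
        by_cases h : σ ω = s
        · rw [if_pos h, if_pos h]
          exact hmono p hp1 hp2 ω
        · rw [if_neg h, if_neg h]
      · intro ω
        rw [hτseq s L ω hk2 le_rfl]
        by_cases h : σ ω = s
        · rw [if_pos h]
          exact le_trans (hτb L hk2 le_rfl ω) le_rfl
        · rw [if_neg h]
      · intro ω
        by_cases h : σ ω = s
        · refine SatCons_congr (fun p hp1 hp2 => ?_) hk2 (htail ω)
          rw [hτseq s p ω hp1 hp2, if_pos h]
        · refine SatCons_congr (fun p hp1 hp2 => ?_) hk2
            (satCons_const (T := T) (hvT ω) (by omega) le_rfl)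
          rw [hτseq s p ω hp1 hp2, if_neg h]
    have hτsm : ∀ s, ∀ p, k ≤ p → p ≤ L → Measurable (τs s p) :=
      fun s p _ _ => (hstτs s p).measurable_nat
    have hτsb : ∀ s, ∀ p, k ≤ p → p ≤ L → ∀ ω, τs s p ω ≤ T + 1 := by
      intro s p h1 h2 ω
      rw [hτseq s p ω h1 h2]
      by_cases h : σ ω = s
      · rw [if_pos h]; exact hτb p h1 h2 ω
      · rw [if_neg h]
    have hWτsint : ∀ s, Integrable (tailPay U V k L (τs s)) μ :=
      fun s => (hWfacts (τs s) (hτsm s) (hτsb s)).1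
    -- decompose `tailPay τ` along the value of `σ`
    have hdecomp : ∀ ω, tailPay U V k L τ ω = ∑ s ∈ Finset.Icc r (T + 1),
        ({ω' | σ ω' = s}).indicator (tailPay U V k L (τs s)) ω := by
      intro ω
      rw [Finset.sum_eq_single (σ ω)]
      · rw [Set.indicator_of_mem (show ω ∈ {ω' | σ ω' = σ ω} from rfl)]
        refine tailPay_congr fun p h1 h2 => ?_
        rw [hτseq (σ ω) p ω h1 h2, if_pos rfl]
      · intro s _ hne
        exact Set.indicator_of_notMem (fun h => hne (by exact h.symm ▸ rfl)) _
      · intro h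
        exact absurd (hσmem ω) h
    -- compare conditional expectations
    have hkey : μ[tailPay U V k L τ|ℱ r] ≤ᵐ[μ] μ[Ybig|ℱ r] := by
      have e0 : μ[tailPay U V k L τ|ℱ r] =ᵐ[μ] fun ω => ∑ s ∈ Finset.Icc r (T + 1),
          (μ[({ω' | σ ω' = s}).indicator (tailPay U V k L (τs s))|ℱ r]) ω := by
        have e0' : tailPay U V k L τ = fun ω => ∑ s ∈ Finset.Icc r (T + 1),
            ({ω' | σ ω' = s}).indicator (tailPay U V k L (τs s)) ω := funext hdecomp
        rw [e0']
        exact hcondsum _ fun s hs => (hWτsint s).indicator (hσset s)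
      have hper : ∀ s ∈ Finset.Icc r (T + 1),
          μ[({ω' | σ ω' = s}).indicator (tailPay U V k L (τs s))|ℱ r]
            ≤ᵐ[μ] μ[({ω' | σ ω' = s}).indicator (Ys s)|ℱ r] := by
        intro s hs
        obtain ⟨h1, h2⟩ := Finset.mem_Icc.1 hs
        have hmem := hmemτs s h1 h2
        have hfle : μ[tailPay U V k L (τs s)|ℱ s] ≤ᵐ[μ] Ys s :=
          (hYsdata s h1 h2).2.2.2.2.1 _ hmem
        have hind : ({ω' | σ ω' = s}).indicator (μ[tailPay U V k L (τs s)|ℱ s])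
            ≤ᵐ[μ] ({ω' | σ ω' = s}).indicator (Ys s) := by
          filter_upwards [hfle] with ω hω
          by_cases h : ω ∈ {ω' | σ ω' = s}
          · rw [Set.indicator_of_mem h, Set.indicator_of_mem h]
            exact hω
          · rw [Set.indicator_of_notMem h, Set.indicator_of_notMem h]
        refine (htower s h1 _ (hWτsint s)).le.trans ?_
        refine condExp_mono ?_ ?_ hind
        · exact integrable_condExp.indicator (hσset s)
        · exact (hYsint s h1 h2).indicator (hσset s)
      refine e0.le.trans ?_
      refine EventuallyLE.trans ?_ hYbigcond.symm.le
      have := (eventually_all_finset (Finset.Icc r (T + 1))).2 hper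
      filter_upwards [this] with ω hω
      exact Finset.sum_le_sum fun s hs => hω s hs
    refine hsplitg.le.trans ?_
    filter_upwards [hkey] with ω hω
    rw [hRHSdef]
    exact add_le_add le_rfl (mul_le_mul_of_nonneg_left hω (hP0 ω))
    -- Step 3: `RHS'` is below every upper bound of the parameterized family
  have hminimal : ∀ Z : Ω → ℝ, (∀ g ∈ parFamily T L μ ℱ U V v ρ k r j, g ≤ᵐ[μ] Z) →
      RHS' ≤ᵐ[μ] Z := by
    intro Z hZ
    have hwit : ∀ s n, ∃ τw : ℕ → Ω → ℕ, (∀ p, IsStoppingTime ℱ (fun ω => ((τw p ω : ℕ) : WithTop ℕ))) ∧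
        (r ≤ s → s ≤ T + 1 →
          (∀ ω, s ≤ τw k ω) ∧ (∀ p, k ≤ p → p < L → ∀ ω, τw p ω ≤ τw (p + 1) ω) ∧
          (∀ ω, τw L ω ≤ T + 1) ∧ (∀ ω, SatCons v ρ k L (fun p => τw p ω) ω) ∧
          fseq s n = μ[tailPay U V k L τw|ℱ s]) := by
      intro s n
      by_cases hs : r ≤ s ∧ s ≤ T + 1
      · obtain ⟨τw, h1, h2, h3, h4, h5, h6⟩ := (hYsdata s hs.1 hs.2).1 n
        exact ⟨τw, h1, fun _ _ => ⟨h2, h3, h4, h5, h6⟩⟩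
      · exact ⟨fun _ _ => T + 1, fun p => isStoppingTime_const ℱ (T + 1),
          fun h1 h2 => absurd ⟨h1, h2⟩ hs⟩
    choose tw htw using hwit
    set τh : ℕ → ℕ → Ω → ℕ := fun n p ω =>
      if k ≤ p ∧ p ≤ L then tw (σ ω) n p ω else T + 1 with hτhdef
    have hτheq : ∀ n p ω, k ≤ p → p ≤ L → τh n p ω = tw (σ ω) n p ω := by
      intro n p ω h1 h2
      rw [hτhdef]
      exact if_pos ⟨h1, h2⟩
    have hstτh : ∀ n p, IsStoppingTime ℱ (fun ω => ((τh n p ω : ℕ) : WithTop ℕ)) := by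
      intro n p
      by_cases hp : k ≤ p ∧ p ≤ L
      · have he : τh n p = fun ω => tw (σ ω) n p ω :=
          funext fun ω => hτheq n p ω hp.1 hp.2
        rw [he]
        refine paste_isStoppingTime σ hσmeas (fun s => tw s n p)
          (fun s => (htw s n).1 p) (fun s ω hs => ?_)
        have h1 : r ≤ s := hs ▸ hσr ω
        have h2 : s ≤ T + 1 := hs ▸ hσT ω
        obtain ⟨hks, hmono', hL', _, _⟩ := (htw s n).2 h1 h2
        exact le_trans (hks ω) (chain_mono_le hmono' le_rfl hp.1 hp.2 ω)
      · have he : τh n p = fun _ => T + 1 := by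
          funext ω
          rw [hτhdef]
          exact if_neg hp
        rw [he]
        exact isStoppingTime_const ℱ (T + 1)
    have hτhm : ∀ n p, k ≤ p → p ≤ L → Measurable (τh n p) :=
      fun n p _ _ => (hstτh n p).measurable_nat
    have hτhb : ∀ n p, k ≤ p → p ≤ L → ∀ ω, τh n p ω ≤ T + 1 := by
      intro n p h1 h2 ω
      rw [hτheq n p ω h1 h2]
      obtain ⟨hks, hmono', hL', _, _⟩ := (htw (σ ω) n).2 (hσr ω) (hσT ω)
      exact le_trans (chain_mono_le hmono' h1 h2 le_rfl ω) (hL' ω)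
    have hmemh : ∀ n, μ[(fun ω => ∑ p ∈ Finset.Icc 1 L,
        U p (if p < k then j p else τh n p ω) ω *
        ∏ l ∈ Finset.Ico 1 p, V l (if l < k then j l else τh n l ω) ω)|ℱ r]
        ∈ parFamily T L μ ℱ U V v ρ k r j := by
      intro n
      refine ⟨τh n, hstτh n, ?_, ?_, ?_, ?_, rfl⟩
      · intro ω
        rw [hτheq n k ω le_rfl hk2]
        obtain ⟨hks, _, _, _, _⟩ := (htw (σ ω) n).2 (hσr ω) (hσT ω)
        exact le_trans (hσr ω) (hks ω)
      · intro p h1 h2 ω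
        rw [hτheq n p ω h1 (by omega), hτheq n (p + 1) ω (by omega) (by omega)]
        obtain ⟨_, hmono', _, _, _⟩ := (htw (σ ω) n).2 (hσr ω) (hσT ω)
        exact hmono' p h1 h2 ω
      · intro ω
        rw [hτheq n L ω hk2 le_rfl]
        obtain ⟨_, _, hL', _, _⟩ := (htw (σ ω) n).2 (hσr ω) (hσT ω)
        exact hL' ω
      · intro ω
        obtain ⟨hks, hmono', hL', hsat', _⟩ := (htw (σ ω) n).2 (hσr ω) (hσT ω)
        have hτgt : ∀ p, k ≤ p → p ≤ L → j (k - 1) < τh n p ω := by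
          intro p h1 h2
          rw [hτheq n p ω h1 h2]
          have h3 := le_trans (hks ω) (chain_mono_le hmono' le_rfl h1 h2 ω)
          have h4 := hσr ω
          omega
        have hsat'' : SatCons v ρ k L (fun p => τh n p ω) ω :=
          SatCons_congr (fun p h1 h2 => (hτheq n p ω h1 h2).symm) hk2 (hsat' ω)
        have hb : ρ (j (k - 1)) ω ≤ τh n k ω := by
          rw [hτheq n k ω le_rfl hk2]
          exact le_trans (le_max_left _ _) (hks ω)
        exact satCons_join hk1 hk2 (hC ω) hsat'' hjle hτgt hb
    -- identification of each member with an explicit formula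
    have hgZ : ∀ n : ℕ, (fun ω => headPay U V k j ω + headProd V k j ω *
        ∑ s ∈ Finset.Icc r (T + 1),
          (μ[({ω' | σ ω' = s}).indicator (fseq s n)|ℱ r]) ω) ≤ᵐ[μ] Z := by
      intro n
      have hle := hZ _ (hmemh n)
      have hsplit' := hsplit (τh n) (hτhm n) (hτhb n)
      have hWsint : ∀ s ∈ Finset.Icc r (T + 1), Integrable (tailPay U V k L (tw s n)) μ := by
        intro s hs
        obtain ⟨h1, h2⟩ := Finset.mem_Icc.1 hs
        obtain ⟨hks, hmono', hL', _, _⟩ := (htw s n).2 h1 h2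
        exact (hWfacts _ (fun p _ _ => ((htw s n).1 p).measurable_nat)
          (fun p hp1 hp2 ω => le_trans (chain_mono_le hmono' hp1 hp2 le_rfl ω) (hL' ω))).1
      have hdecomp' : ∀ ω, tailPay U V k L (τh n) ω = ∑ s ∈ Finset.Icc r (T + 1),
          ({ω' | σ ω' = s}).indicator (tailPay U V k L (tw s n)) ω := by
        intro ω
        rw [Finset.sum_eq_single (σ ω)]
        · rw [Set.indicator_of_mem (show ω ∈ {ω' | σ ω' = σ ω} from rfl)]
          exact tailPay_congr fun p h1 h2 => hτheq n p ω h1 h2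
        · intro s _ hne
          exact Set.indicator_of_notMem (fun h => hne (by exact h.symm ▸ rfl)) _
        · intro h
          exact absurd (hσmem ω) h
      have e0 : μ[tailPay U V k L (τh n)|ℱ r] =ᵐ[μ] fun ω => ∑ s ∈ Finset.Icc r (T + 1),
          (μ[({ω' | σ ω' = s}).indicator (tailPay U V k L (tw s n))|ℱ r]) ω := by
        rw [funext hdecomp']
        exact hcondsum _ fun s hs => (hWsint s hs).indicator (hσset s)
      have e1 : ∀ s ∈ Finset.Icc r (T + 1),
          μ[({ω' | σ ω' = s}).indicator (tailPay U V k L (tw s n))|ℱ r]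
            =ᵐ[μ] μ[({ω' | σ ω' = s}).indicator (fseq s n)|ℱ r] := by
        intro s hs
        obtain ⟨h1, h2⟩ := Finset.mem_Icc.1 hs
        refine (htower s h1 _ (hWsint s hs)).trans ?_
        refine condExp_congr_ae ?_
        refine Eventually.of_forall fun ω => ?_
        rw [((htw s n).2 h1 h2).2.2.2.2]
      have e2 : (fun ω => ∑ s ∈ Finset.Icc r (T + 1),
            (μ[({ω' | σ ω' = s}).indicator (tailPay U V k L (tw s n))|ℱ r]) ω)
          =ᵐ[μ] fun ω => ∑ s ∈ Finset.Icc r (T + 1),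
            (μ[({ω' | σ ω' = s}).indicator (fseq s n)|ℱ r]) ω := by
        have := (eventually_all_finset (Finset.Icc r (T + 1))).2 e1
        filter_upwards [this] with ω hω
        exact Finset.sum_congr rfl fun s hs => hω s hs
      have hmemeq : μ[(fun ω => ∑ p ∈ Finset.Icc 1 L,
          U p (if p < k then j p else τh n p ω) ω *
          ∏ l ∈ Finset.Ico 1 p, V l (if l < k then j l else τh n l ω) ω)|ℱ r]
          =ᵐ[μ] fun ω => headPay U V k j ω + headProd V k j ω *
            ∑ s ∈ Finset.Icc r (T + 1),
              (μ[({ω' | σ ω' = s}).indicator (fseq s n)|ℱ r]) ω := by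
        refine hsplit'.trans ?_
        filter_upwards [e0, e2] with ω h0 h2'
        rw [h0, h2']
      exact (hmemeq.symm.le).trans hle
    -- conditional monotone convergence in each piece
    have hcmct : ∀ s ∈ Finset.Icc r (T + 1), ∀ᵐ ω ∂μ,
        Tendsto (fun n => (μ[({ω' | σ ω' = s}).indicator (fseq s n)|ℱ r]) ω) atTop
          (𝓝 ((μ[({ω' | σ ω' = s}).indicator (Ys s)|ℱ r]) ω)) := by
      intro s hs
      obtain ⟨h1, h2⟩ := Finset.mem_Icc.1 hs
      obtain ⟨hmemf, hmonof, htendf, hYint', hess⟩ := hYsdata s h1 h2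
      refine tendsto_condexp_of_monotone (ℱ.le r)
        (fun n => (hFam_int s _ (hmemf n)).indicator (hσset s))
        ((hYsint s h1 h2).indicator (hσset s)) ?_ ?_
      · filter_upwards [hmonof] with ω hm
        intro a b hab
        beta_reduce
        by_cases h : ω ∈ {ω' | σ ω' = s}
        · rw [Set.indicator_of_mem h, Set.indicator_of_mem h]
          exact hm hab
        · rw [Set.indicator_of_notMem h, Set.indicator_of_notMem h]
      · filter_upwards [htendf] with ω ht
        by_cases h : ω ∈ {ω' | σ ω' = s}
        · simp only [Set.indicator_of_mem h]
          exact ht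
        · simp only [Set.indicator_of_notMem h]
          exact tendsto_const_nhds
    have hall := (eventually_all_finset (Finset.Icc r (T + 1))).2 hcmct
    have hallZ : ∀ᵐ ω ∂μ, ∀ n : ℕ, headPay U V k j ω + headProd V k j ω *
        ∑ s ∈ Finset.Icc r (T + 1),
          (μ[({ω' | σ ω' = s}).indicator (fseq s n)|ℱ r]) ω ≤ Z ω := by
      rw [ae_all_iff]
      intro n
      exact hgZ n
    filter_upwards [hall, hallZ, hYbigcond] with ω hωt hωZ hωY
    have htt : Tendsto (fun n => headPay U V k j ω + headProd V k j ω *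
        ∑ s ∈ Finset.Icc r (T + 1),
          (μ[({ω' | σ ω' = s}).indicator (fseq s n)|ℱ r]) ω) atTop
        (𝓝 (headPay U V k j ω + headProd V k j ω *
          ∑ s ∈ Finset.Icc r (T + 1),
            (μ[({ω' | σ ω' = s}).indicator (Ys s)|ℱ r]) ω)) :=
      tendsto_const_nhds.add (tendsto_const_nhds.mul
        (tendsto_finset_sum _ fun s hs => hωt s hs))
    have hlim := le_of_tendsto htt (Eventually.of_forall fun n => hωZ n)
    rw [hRHSdef]
    show headPay U V k j ω + headProd V k j ω * (μ[Ybig|ℱ r]) ω ≤ Z ω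
    rw [hωY]
    exact hlim
  -- final assembly
  have hYparEss := hYpar k r j (by omega) hk2 hj (fun p h1 h2 => le_of_lt (hjr' p h1 h2)) hr
  have h1 : Ypar k r j ≤ᵐ[μ] RHS' := hYparEss.2 RHS' hupper
  have h2 : RHS' ≤ᵐ[μ] Ypar k r j := hminimal (Ypar k r j) hYparEss.1
  have h3 : Ypar k r j =ᵐ[μ] RHS' := h1.antisymm h2
  refine h3.trans ?_
  filter_upwards [hcond_congr] with ω hω
  show headPay U V k j ω + headProd V k j ω * (μ[Ybig|ℱ r]) ω
    = headPay U V k j ω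
      + (μ[(fun ω' => Ystar k (max (ρ (j (k - 1)) ω') r) ω')|ℱ r]) ω * headProd V k j ω
  rw [hω]
  ring
end
end

section
/- Doob martingale of the shifted conditional Snell envelope: let Y*^{L−k+1} have Doob decomposition Y*_r^{L−k+1} = Y*_0^{L−k+1} + M*_r^{L−k+1} − A*_r^{L−k+1} with martingale part M*^{L−k+1} and predictable part A*^{L−k+1}. Fix j_{k−1} and the stopping time ρ^{j_{k−1}} ∈ {j_{k−1}+1,…,∂}. Then the process r ↦ E[ Y*_{ρ^{j_{k−1}} ∨ r}^{L−k+1} | F_r ], r ≥ j_{k−1}, admits a Doob martingale (M̄*_r^{L−k+1})_{r ≥ j_{k−1}} whose increments are given by M̄*_r^{L−k+1} − M̄*_{j_{k−1}}^{L−k+1} = M*_r^{L−k+1} − M*_{j_{k−1}}^{L−k+1} + E[ A*_{ρ^{j_{k−1}}}^{L−k+1} | F_{j_{k−1}} ] − E[ A*_{ρ^{j_{k−1}}}^{L−k+1} | F_r ]. -/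
open MeasureTheory

noncomputable section

variable {Ω : Type*} [m0 : MeasurableSpace Ω]

/-- `M` is a martingale w.r.t. the filtration `ℱ` from time `p` on. -/
def IsMartingaleFrom (μ : Measure Ω) (ℱ : Filtration ℕ m0) (p : ℕ) (M : ℕ → Ω → ℝ) : Prop :=
  (∀ r, p ≤ r → StronglyMeasurable[ℱ r] (M r)) ∧
  (∀ r, p ≤ r → Integrable (M r) μ) ∧
  ∀ r, p ≤ r → μ[M (r + 1)|ℱ r] =ᵐ[μ] M r

/-- `(M, A)` is the Doob decomposition of the adapted integrable process `Y`:
`M` is a martingale, `A` is predictable, `M 0 = A 0 = 0` and `Y r = Y 0 + M r - A r`. -/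
def IsDoobDecomp (μ : Measure Ω) (ℱ : Filtration ℕ m0) (Y M A : ℕ → Ω → ℝ) : Prop :=
  IsMartingaleFrom μ ℱ 0 M ∧
  (∀ r, 0 < r → StronglyMeasurable[ℱ (r - 1)] (A r)) ∧
  (∀ r, Integrable (A r) μ) ∧
  M 0 = 0 ∧ A 0 = 0 ∧
  ∀ r, Y r =ᵐ[μ] fun ω => Y 0 ω + M r ω - A r ω

/-- `M` is a Doob martingale of the process `Y` from time `p` on: `M` is a martingale and
there exists a predictable process `A` such that `Y r - M r + A r` is `ℱ p`-measurable
for every `r ≥ p`. -/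
def IsDoobMartingaleFrom (μ : Measure Ω) (ℱ : Filtration ℕ m0) (p : ℕ)
    (Y M : ℕ → Ω → ℝ) : Prop :=
  IsMartingaleFrom μ ℱ p M ∧
  ∃ A : ℕ → Ω → ℝ, (∀ r, p < r → StronglyMeasurable[ℱ (r - 1)] (A r)) ∧
    ∀ r, p ≤ r → StronglyMeasurable[ℱ p] (fun ω => Y r ω - M r ω + A r ω)

private lemma tele_sum (f : ℕ → ℝ) {a b : ℕ} (h : a ≤ b) :
    ∑ s ∈ Finset.Ico a b, (f (s + 1) - f s) = f b - f a := by
  rw [Finset.sum_Ico_eq_sub _ h, Finset.sum_range_sub, Finset.sum_range_sub]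
  ring

/-- Recursive construction of the martingale part of the Doob decomposition of `Y`
from time `q` on. -/
def doobMb (μ : Measure Ω) (ℱ : Filtration ℕ m0) (q : ℕ) (Y : ℕ → Ω → ℝ) : ℕ → Ω → ℝ
  | 0 => Y q
  | (r + 1) => if r + 1 ≤ q then Y q
      else fun ω => doobMb μ ℱ q Y r ω + Y (r + 1) ω - (μ[Y (r + 1)|ℱ r]) ω

lemma doobMb_at_q (μ : Measure Ω) (ℱ : Filtration ℕ m0) (q : ℕ) (Y : ℕ → Ω → ℝ) :
    doobMb μ ℱ q Y q = Y q := by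
  cases q with
  | zero => rfl
  | succ n => simp [doobMb]

lemma doobMb_succ (μ : Measure Ω) (ℱ : Filtration ℕ m0) {q : ℕ} (Y : ℕ → Ω → ℝ)
    {r : ℕ} (h : q ≤ r) :
    doobMb μ ℱ q Y (r + 1) =
      fun ω => doobMb μ ℱ q Y r ω + Y (r + 1) ω - (μ[Y (r + 1)|ℱ r]) ω := by
  rw [doobMb, if_neg (by omega)]

lemma isDoobMartingaleFrom_doobMb (μ : Measure Ω) [IsProbabilityMeasure μ]
    (ℱ : Filtration ℕ m0) (q : ℕ) (Y : ℕ → Ω → ℝ)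
    (hSM : ∀ r, q ≤ r → StronglyMeasurable[ℱ r] (Y r))
    (hInt : ∀ r, Integrable (Y r) μ) :
    IsDoobMartingaleFrom μ ℱ q Y (doobMb μ ℱ q Y) := by
  have hq0 : doobMb μ ℱ q Y q = Y q := doobMb_at_q μ ℱ q Y
  have hMbSM : ∀ r, q ≤ r → StronglyMeasurable[ℱ r] (doobMb μ ℱ q Y r) := by
    intro r hr
    induction r, hr using Nat.le_induction with
    | base => rw [hq0]; exact hSM q le_rfl
    | succ r hr ih =>
      rw [doobMb_succ μ ℱ Y hr]
      exact ((ih.mono (ℱ.mono (Nat.le_succ r))).add (hSM (r + 1) (by omega))).sub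
        (stronglyMeasurable_condExp.mono (ℱ.mono (Nat.le_succ r)))
  have hMbInt : ∀ r, q ≤ r → Integrable (doobMb μ ℱ q Y r) μ := by
    intro r hr
    induction r, hr using Nat.le_induction with
    | base => rw [hq0]; exact hInt q
    | succ r hr ih =>
      rw [doobMb_succ μ ℱ Y hr]
      exact (ih.add (hInt (r + 1))).sub integrable_condExp
  refine ⟨⟨hMbSM, hMbInt, ?_⟩,
    fun r ω => doobMb μ ℱ q Y r ω - Y r ω, ?_, ?_⟩
  · intro r hr
    rw [doobMb_succ μ ℱ Y hr]
    have heq : (fun ω => doobMb μ ℱ q Y r ω + Y (r + 1) ω - (μ[Y (r + 1)|ℱ r]) ω)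
        = doobMb μ ℱ q Y r + Y (r + 1) - μ[Y (r + 1)|ℱ r] := rfl
    rw [heq]
    have h1 := condExp_sub (m := ℱ r) (μ := μ) (f := doobMb μ ℱ q Y r + Y (r + 1))
      (g := μ[Y (r + 1)|ℱ r]) ((hMbInt r hr).add (hInt (r + 1))) integrable_condExp
    have h2 := condExp_add (m := ℱ r) (μ := μ) (hMbInt r hr) (hInt (r + 1))
    have h3 : μ[doobMb μ ℱ q Y r|ℱ r] = doobMb μ ℱ q Y r :=
      condExp_of_stronglyMeasurable (ℱ.le r) (hMbSM r hr) (hMbInt r hr)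
    have h4 : μ[(μ[Y (r + 1)|ℱ r])|ℱ r] = μ[Y (r + 1)|ℱ r] :=
      condExp_of_stronglyMeasurable (ℱ.le r) stronglyMeasurable_condExp integrable_condExp
    filter_upwards [h1, h2] with ω e1 e2
    rw [e1]
    simp only [Pi.sub_apply, Pi.add_apply]
    rw [e2, h3, h4]
    simp only [Pi.add_apply]
    ring
  · intro r hr
    obtain ⟨s, rfl⟩ : ∃ s, r = s + 1 := ⟨r - 1, by omega⟩
    have hs : q ≤ s := by omega
    have heq : (fun ω => doobMb μ ℱ q Y (s + 1) ω - Y (s + 1) ω)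
        = fun ω => doobMb μ ℱ q Y s ω - (μ[Y (s + 1)|ℱ s]) ω := by
      funext ω; rw [doobMb_succ μ ℱ Y hs]; ring
    simp only [Nat.add_sub_cancel]
    rw [heq]
    exact (hMbSM s hs).sub stronglyMeasurable_condExp
  · intro r hr
    have heq : (fun ω => Y r ω - doobMb μ ℱ q Y r ω + (doobMb μ ℱ q Y r ω - Y r ω))
        = fun _ => (0 : ℝ) := by funext ω; ring
    rw [heq]
    exact stronglyMeasurable_const

lemma doobMb_increment (μ : Measure Ω) [IsProbabilityMeasure μ] (ℱ : Filtration ℕ m0)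
    (q : ℕ) (Y : ℕ → Ω → ℝ) (W : Ω → ℝ) (N E D : ℕ → Ω → ℝ)
    (hYf : ∀ r, q ≤ r → Y r =ᵐ[μ] fun ω => W ω + N r ω - E r ω - D r ω)
    (hcond : ∀ r, q ≤ r →
      μ[Y (r + 1)|ℱ r] =ᵐ[μ] fun ω => W ω + N r ω - E r ω - D (r + 1) ω) :
    ∀ r, q ≤ r → doobMb μ ℱ q Y r =ᵐ[μ]
      fun ω => doobMb μ ℱ q Y q ω + (N r ω - N q ω + E q ω - E r ω) := by
  intro r hr
  induction r, hr using Nat.le_induction with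
  | base => exact Filter.Eventually.of_forall fun ω => by ring
  | succ r hr ih =>
    rw [doobMb_succ μ ℱ Y hr]
    filter_upwards [hYf (r + 1) (by omega), hcond r hr, ih] with ω h1 h2 h3
    rw [h1, h2, h3]
    ring

/-- **Doob martingale of the shifted conditional Snell envelope.** Let the auxiliary Snell
envelope `Y*^{L-k+1} = Ystar k` have Doob decomposition with martingale part `M` and
predictable part `A`, and fix `q = j (k-1) ≤ T` with refraction stopping time
`ρ q ∈ {q+1, ..., T+1}`. Then the process `r ↦ E[ Y*_{ρ q ∨ r}^{L-k+1} | ℱ r ]`, `r ≥ q`,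
admits a Doob martingale `Mb` whose increments are
`Mb r - Mb q = M r - M q + E[A (ρ q) | ℱ q] - E[A (ρ q) | ℱ r]`. -/
theorem doob_martingale_shifted_conditional_snell
    (T L : ℕ) (μ : Measure Ω) [IsProbabilityMeasure μ] (ℱ : Filtration ℕ m0)
    (U V : ℕ → ℕ → Ω → ℝ) (v ρ : ℕ → Ω → ℕ)
    (hL : 1 ≤ L)
    (hU : ∀ p i, 1 ≤ p → p ≤ L → i ≤ T + 1 →
      StronglyMeasurable[ℱ i] (U p i) ∧ Integrable (U p i) μ)
    (hV : ∀ l i, 1 ≤ l → l ≤ L - 1 → i ≤ T + 1 →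
      StronglyMeasurable[ℱ i] (V l i) ∧ (∀ ω, 0 < V l i ω) ∧ ∃ c : ℝ, ∀ ω, V l i ω ≤ c)
    (hvad : ∀ i, i ≤ T + 1 → Measurable[ℱ i] (v i))
    (hvb : ∀ i ω, i ≤ T + 1 → 1 ≤ v i ω ∧ v i ω ≤ L)
    (hvT : ∀ ω, v (T + 1) ω = L)
    (hρ : ∀ i, i ≤ T → IsStoppingTime ℱ (fun ω => ((ρ i ω : ℕ) : WithTop ℕ)) ∧ ∀ ω, i + 1 ≤ ρ i ω ∧ ρ i ω ≤ T + 1)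
    -- `Ystar k r` is the auxiliary Snell envelope `Y*_r^{L-k+1}`
    (Ystar : ℕ → ℕ → Ω → ℝ)
    (hY : ∀ k r, 1 ≤ k → k ≤ L → r ≤ T + 1 →
      IsEssSupFamily μ (auxFamily T L μ ℱ U V v ρ k r) (Ystar k r))
    (hY0 : ∀ r, Ystar (L + 1) r = 0)
    (k q : ℕ) (hk1 : 1 ≤ k) (hkL : k ≤ L) (hq : q ≤ T)
    (M A : ℕ → Ω → ℝ)
    (hdoob : IsDoobDecomp μ ℱ (Ystar k) M A) :
    ∃ Mb : ℕ → Ω → ℝ,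
      IsDoobMartingaleFrom μ ℱ q
        (fun r => μ[(fun ω => Ystar k (max (ρ q ω) r) ω)|ℱ r]) Mb ∧
      ∀ r, q ≤ r →
        (fun ω => Mb r ω - Mb q ω) =ᵐ[μ]
          fun ω => M r ω - M q ω + (μ[(fun ω' => A (ρ q ω') ω')|ℱ q]) ω
            - (μ[(fun ω' => A (ρ q ω') ω')|ℱ r]) ω := by
  have hle : ∀ i, (ℱ i : MeasurableSpace Ω) ≤ m0 := fun i => ℱ.le i
  obtain ⟨⟨hMsm, hMint, hMmart⟩, hAsm, hAint, hM0, hA0, hYD⟩ := hdoob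
  obtain ⟨hρst, hρb⟩ := hρ q hq
  set g : Ω → ℝ := fun ω' => A (ρ q ω') ω' with hgdef
  -- integrability of `g = A ∘ ρ q`
  have hgint : Integrable g μ := by
    have hgeq : g = fun ω => ∑ s ∈ Finset.Icc (q + 1) (T + 1),
        ({ω' | ρ q ω' = s}.indicator (A s)) ω := by
      funext ω
      have hmem : ρ q ω ∈ Finset.Icc (q + 1) (T + 1) :=
        Finset.mem_Icc.2 ⟨(hρb ω).1, (hρb ω).2⟩
      have h2 : (∑ s ∈ Finset.Icc (q + 1) (T + 1), if ρ q ω = s then A s ω else 0)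
          = A (ρ q ω) ω := by
        rw [Finset.sum_ite_eq, if_pos hmem]
      simp only [Set.indicator_apply, Set.mem_setOf_eq, hgdef]
      exact h2.symm
    rw [hgeq]
    exact integrable_finset_sum _ fun s _ =>
      (hAint s).indicator (hle s _ (by simpa using hρst.measurableSet_eq s))
  -- predictable increments of `A` after `ρ q`
  set Dt : ℕ → Ω → ℝ :=
    fun s => {ω' | ρ q ω' ≤ s}.indicator (fun ω' => A (s + 1) ω' - A s ω') with hDt
  set D : ℕ → Ω → ℝ := fun r ω => ∑ s ∈ Finset.range r, Dt s ω with hDdef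
  have hAsm' : ∀ s, StronglyMeasurable[ℱ s] (A s) := by
    intro s
    cases s with
    | zero => rw [hA0]; exact stronglyMeasurable_const
    | succ t => simpa using (hAsm (t + 1) (by omega)).mono (ℱ.mono (by omega))
  have hDtsm : ∀ s, StronglyMeasurable[ℱ s] (Dt s) := by
    intro s
    have hA1 : StronglyMeasurable[ℱ s] (A (s + 1)) := by
      simpa using hAsm (s + 1) (by omega)
    exact (hA1.sub (hAsm' s)).indicator (by simpa using hρst s)
  have hDsm : ∀ r t, r ≤ t + 1 → StronglyMeasurable[ℱ t] (D r) := by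
    intro r t h
    exact Finset.stronglyMeasurable_fun_sum _ fun s hs =>
      (hDtsm s).mono (ℱ.mono (by simp only [Finset.mem_range] at hs; omega))
  have hDint : ∀ r, Integrable (D r) μ := fun r =>
    integrable_finset_sum _ fun s _ =>
      ((hAint (s + 1)).sub (hAint s)).indicator (hle s _ (by simpa using hρst s))
  have hApt : ∀ r ω, A (max (ρ q ω) r) ω = g ω + D r ω := by
    intro r ω
    rcases le_or_gt (ρ q ω) r with h | h
    · have hmax : max (ρ q ω) r = r := max_eq_right h
      have hsum : D r ω = A r ω - A (ρ q ω) ω := by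
        have h1 : D r ω
            = ∑ s ∈ Finset.range r, (if ρ q ω ≤ s then A (s + 1) ω - A s ω else 0) := by
          simp only [hDdef, hDt, Set.indicator_apply, Set.mem_setOf_eq]
        have hfil : (Finset.range r).filter (fun s => ρ q ω ≤ s) = Finset.Ico (ρ q ω) r := by
          ext s
          simp only [Finset.mem_filter, Finset.mem_range, Finset.mem_Ico]
          omega
        rw [h1, ← Finset.sum_filter, hfil, tele_sum (fun s => A s ω) h]
      rw [hmax, hsum, hgdef]
      ring
    · have hmax : max (ρ q ω) r = ρ q ω := max_eq_left h.le
      have hzero : D r ω = 0 := by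
        refine Finset.sum_eq_zero fun s hs => ?_
        simp only [Finset.mem_range] at hs
        simp only [hDt, Set.indicator_apply, Set.mem_setOf_eq]
        rw [if_neg (by omega)]
      rw [hmax, hzero, hgdef]
      ring
  -- martingale increments after time `r` and before `ρ q`
  have hltms : ∀ s, MeasurableSet[ℱ s] {ω | s < ρ q ω} := by
    intro s
    have := (show MeasurableSet[ℱ s] {ω | ρ q ω ≤ s} by simpa using hρst s).compl
    simpa only [Set.compl_setOf, not_le] using this
  set St : ℕ → Ω → ℝ :=
    fun s => {ω' | s < ρ q ω'}.indicator (fun ω' => M (s + 1) ω' - M s ω') with hSt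
  set SMf : ℕ → Ω → ℝ := fun r ω => ∑ s ∈ Finset.Ico r (T + 1), St s ω with hSMf
  have hStint : ∀ s, Integrable (St s) μ := fun s =>
    ((hMint (s + 1) (by omega)).sub (hMint s (by omega))).indicator (hle s _ (hltms s))
  have hSMint : ∀ r, Integrable (SMf r) μ := fun r =>
    integrable_finset_sum _ fun s _ => hStint s
  have hMpt : ∀ r ω, M (max (ρ q ω) r) ω = M r ω + SMf r ω := by
    intro r ω
    rcases le_or_gt (ρ q ω) r with h | h
    · have hmax : max (ρ q ω) r = r := max_eq_right h
      have hzero : SMf r ω = 0 := by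
        refine Finset.sum_eq_zero fun s hs => ?_
        simp only [Finset.mem_Ico] at hs
        simp only [hSt, Set.indicator_apply, Set.mem_setOf_eq]
        rw [if_neg (by omega)]
      rw [hmax, hzero, add_zero]
    · have hmax : max (ρ q ω) r = ρ q ω := max_eq_left h.le
      have hsum : SMf r ω = M (ρ q ω) ω - M r ω := by
        have h1 : SMf r ω
            = ∑ s ∈ Finset.Ico r (T + 1), (if s < ρ q ω then M (s + 1) ω - M s ω else 0) := by
          simp only [hSMf, hSt, Set.indicator_apply, Set.mem_setOf_eq]
        have hfil : (Finset.Ico r (T + 1)).filter (fun s => s < ρ q ω)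
            = Finset.Ico r (ρ q ω) := by
          ext s
          have := (hρb ω).2
          simp only [Finset.mem_filter, Finset.mem_Ico]
          omega
        rw [h1, ← Finset.sum_filter, hfil, tele_sum (fun s => M s ω) h.le]
      rw [hmax, hsum]
      ring
  have hSce : ∀ r, (μ[SMf r|ℱ r]) =ᵐ[μ] 0 := by
    intro r
    have hsum : SMf r = ∑ s ∈ Finset.Ico r (T + 1), St s := by
      funext ω
      rw [Finset.sum_apply]
    have hterm : ∀ s ∈ Finset.Ico r (T + 1), μ[St s|ℱ r] =ᵐ[μ] 0 := by
      intro s hs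
      have hrs : r ≤ s := (Finset.mem_Ico.1 hs).1
      have hdm : μ[(fun ω' => M (s + 1) ω' - M s ω')|ℱ s] =ᵐ[μ] 0 := by
        have h1 := condExp_sub (m := ℱ s) (μ := μ) (hMint (s + 1) (by omega))
          (hMint s (by omega))
        have h2 : μ[M s|ℱ s] = M s :=
          condExp_of_stronglyMeasurable (hle s) (hMsm s (by omega)) (hMint s (by omega))
        refine h1.trans ?_
        filter_upwards [hMmart s (by omega)] with ω hω
        simp only [Pi.sub_apply, Pi.zero_apply, h2, hω]
        ring
      have hinner : μ[St s|ℱ s] =ᵐ[μ] 0 := by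
        refine (condExp_indicator (m := ℱ s)
          ((hMint (s + 1) (by omega)).sub (hMint s (by omega)))
          (hltms s)).trans ?_
        filter_upwards [hdm] with ω hω
        by_cases hmem : ω ∈ {ω' | s < ρ q ω'}
        · simpa [Set.indicator_of_mem hmem] using (show (μ[M (s + 1) - M s|ℱ s]) ω = 0 from hω)
        · simp [Set.indicator_of_notMem hmem]
      calc μ[St s|ℱ r] =ᵐ[μ] μ[(μ[St s|ℱ s])|ℱ r] :=
            (condExp_condExp_of_le (ℱ.mono hrs) (hle s)).symm
        _ =ᵐ[μ] μ[(0 : Ω → ℝ)|ℱ r] := condExp_congr_ae hinner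
        _ = 0 := condExp_zero
    rw [hsum]
    refine (condExp_finsetSum (fun s _ => hStint s) (ℱ r)).trans ?_
    have hall := (Filter.eventually_all_finset (Finset.Ico r (T + 1))
      (p := fun s ω => (μ[St s|ℱ r]) ω = (0 : Ω → ℝ) ω)).2 hterm
    filter_upwards [hall] with ω hω
    rw [Finset.sum_apply]
    simp only [Pi.zero_apply]
    exact Finset.sum_eq_zero fun s hs => by simpa using hω s hs
  -- `Ystar k (T+1)` is a.e. a conditional expectation
  set G : Ω → ℝ := fun ω => ∑ p ∈ Finset.Icc k L,
    U p (T + 1) ω * ∏ l ∈ Finset.Ico k p, V l (T + 1) ω with hG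
  have hmemT : (μ[G|ℱ (T + 1)]) ∈ auxFamily T L μ ℱ U V v ρ k (T + 1) := by
    refine ⟨fun _ _ => T + 1, fun p => isStoppingTime_const ℱ (T + 1),
      fun ω => le_rfl, fun p _ _ ω => le_rfl, fun ω => le_rfl, fun ω => ⟨?_, ?_⟩, rfl⟩
    · intro l hkl hlL
      have hec : ECount k l (fun _ => T + 1) = l + 1 - k := by
        unfold ECount
        rw [Finset.filter_true_of_mem (fun _ _ => rfl), Nat.card_Icc]
      rw [hec, hvT ω]
      omega
    · intro l _ _ hlt
      exact absurd hlt (lt_irrefl _)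
  have hYT : Ystar k (T + 1) =ᵐ[μ] μ[G|ℱ (T + 1)] := by
    obtain ⟨hub, hmin⟩ := hY k (T + 1) hk1 hkL le_rfl
    refine (hmin _ ?_).antisymm (hub _ hmemT)
    intro f hf
    obtain ⟨τ, hst, hlb, hmono, hub', hcons, hfeq⟩ := hf
    have hchain : ∀ a b, k ≤ a → a ≤ b → b ≤ L → ∀ ω, τ a ω ≤ τ b ω := by
      intro a b hka hab
      induction b, hab using Nat.le_induction with
      | base => intro _ ω; exact le_rfl
      | succ b hab ih =>
        intro hbL ω
        exact le_trans (ih (by omega) ω) (hmono b (by omega) (by omega) ω)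
    have hτ : ∀ p ω, k ≤ p → p ≤ L → τ p ω = T + 1 := by
      intro p ω hkp hpL
      have h1 : τ p ω ≤ T + 1 := le_trans (hchain p L hkp hpL le_rfl ω) (hub' ω)
      have h2 : T + 1 ≤ τ p ω := le_trans (hlb ω) (hchain k p le_rfl hkp hpL ω)
      omega
    have hint_eq : (fun ω => ∑ p ∈ Finset.Icc k L,
        U p (τ p ω) ω * ∏ l ∈ Finset.Ico k p, V l (τ l ω) ω) = G := by
      funext ω
      refine Finset.sum_congr rfl fun p hp => ?_
      rw [Finset.mem_Icc] at hp
      rw [hτ p ω hp.1 hp.2]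
      congr 1
      refine Finset.prod_congr rfl fun l hl => ?_
      rw [Finset.mem_Ico] at hl
      rw [hτ l ω hl.1 (by omega)]
    rw [hfeq, hint_eq]
  -- integrability of the Snell envelope and its `ℱ 0`-measurable version `W`
  have hY0int : Integrable (Ystar k 0) μ := by
    have h2 : Ystar k 0 =ᵐ[μ] fun ω => (μ[G|ℱ (T + 1)]) ω - M (T + 1) ω + A (T + 1) ω := by
      filter_upwards [hYD (T + 1), hYT] with ω e1 e2
      rw [e2] at e1
      linarith
    exact Integrable.congr
      ((integrable_condExp.sub (hMint (T + 1) (by omega))).add (hAint (T + 1))) h2.symm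
  have hYint : ∀ s, Integrable (Ystar k s) μ := fun s =>
    Integrable.congr ((hY0int.add (hMint s (by omega))).sub (hAint s)) (hYD s).symm
  set W : Ω → ℝ := μ[Ystar k 0|ℱ 0] with hWdef
  have hWint : Integrable W μ := integrable_condExp
  have hWsm : StronglyMeasurable[ℱ 0] W := stronglyMeasurable_condExp
  have hW0 : Ystar k 0 =ᵐ[μ] W := by
    obtain ⟨hub, hmin⟩ := hY k 0 hk1 hkL (by omega)
    have hup : Ystar k 0 ≤ᵐ[μ] W := by
      refine hmin W ?_
      intro f hf
      have hfY := hub f hf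
      obtain ⟨τ, hst, hlb, hmono, hub', hcons, hfeq⟩ := hf
      subst hfeq
      have h1 : μ[(fun ω => ∑ p ∈ Finset.Icc k L,
            U p (τ p ω) ω * ∏ l ∈ Finset.Ico k p, V l (τ l ω) ω)|ℱ 0]
          =ᵐ[μ] μ[(μ[(fun ω => ∑ p ∈ Finset.Icc k L,
            U p (τ p ω) ω * ∏ l ∈ Finset.Ico k p, V l (τ l ω) ω)|ℱ 0])|ℱ 0] :=
        (condExp_condExp_of_le le_rfl (hle 0)).symm
      have h2 := condExp_mono (μ := μ) (m := ℱ 0) integrable_condExp hY0int hfY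
      exact h1.le.trans h2
    have hint0 : ∫ ω, (W ω - Ystar k 0 ω) ∂μ = 0 := by
      rw [integral_sub hWint hY0int, hWdef, integral_condExp (hle 0), sub_self]
    have hnn : 0 ≤ᵐ[μ] fun ω => W ω - Ystar k 0 ω := by
      filter_upwards [hup] with ω h
      simpa [sub_nonneg] using h
    have hzero := (integral_eq_zero_iff_of_nonneg_ae hnn (hWint.sub hY0int)).1 hint0
    filter_upwards [hzero] with ω h
    have : W ω - Ystar k 0 ω = 0 := h
    linarith
  -- the shifted conditional Snell envelope and its semimartingale decomposition
  set Yp : ℕ → Ω → ℝ := fun r => μ[(fun ω => Ystar k (max (ρ q ω) r) ω)|ℱ r] with hYpdef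
  have hYform : ∀ r, q ≤ r →
      Yp r =ᵐ[μ] fun ω => W ω + M r ω - (μ[g|ℱ r]) ω - D r ω := by
    intro r _
    have hH : (fun ω => Ystar k (max (ρ q ω) r) ω)
        =ᵐ[μ] (W + M r + SMf r - g - D r : Ω → ℝ) := by
      have hall : ∀ᵐ ω ∂μ, ∀ s ∈ Finset.Icc r (max (T + 1) r),
          Ystar k s ω = Ystar k 0 ω + M s ω - A s ω := by
        rw [Filter.eventually_all_finset]
        intro s _
        exact hYD s
      filter_upwards [hall, hW0] with ω h1 h2
      have hmem : max (ρ q ω) r ∈ Finset.Icc r (max (T + 1) r) :=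
        Finset.mem_Icc.2 ⟨le_max_right _ _, max_le_max (hρb ω).2 le_rfl⟩
      simp only [Pi.add_apply, Pi.sub_apply]
      rw [h1 _ hmem, h2, hMpt r ω, hApt r ω]
      ring
    have e0 : Yp r =ᵐ[μ] μ[(W + M r + SMf r - g - D r : Ω → ℝ)|ℱ r] :=
      condExp_congr_ae hH
    have e1 := condExp_sub (m := ℱ r) (μ := μ) (f := W + M r + SMf r - g) (g := D r)
      (((hWint.add (hMint r (by omega))).add (hSMint r)).sub hgint) (hDint r)
    have e2 := condExp_sub (m := ℱ r) (μ := μ) (f := W + M r + SMf r) (g := g)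
      ((hWint.add (hMint r (by omega))).add (hSMint r)) hgint
    have e3 := condExp_add (m := ℱ r) (μ := μ) (f := W + M r) (g := SMf r)
      (hWint.add (hMint r (by omega))) (hSMint r)
    have e4 := condExp_add (m := ℱ r) (μ := μ) (f := W) (g := M r)
      hWint (hMint r (by omega))
    have hWce : μ[W|ℱ r] = W :=
      condExp_of_stronglyMeasurable (hle r) (hWsm.mono (ℱ.mono (Nat.zero_le r))) hWint
    have hMce : μ[M r|ℱ r] = M r :=
      condExp_of_stronglyMeasurable (hle r) (hMsm r (by omega)) (hMint r (by omega))
    have hDce : μ[D r|ℱ r] = D r :=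
      condExp_of_stronglyMeasurable (hle r) (hDsm r r (by omega)) (hDint r)
    refine e0.trans ?_
    filter_upwards [e1, e2, e3, e4, hSce r] with ω a1 a2 a3 a4 a5
    rw [a1]
    simp only [Pi.sub_apply, Pi.add_apply]
    rw [a2]
    simp only [Pi.sub_apply, Pi.add_apply]
    rw [a3]
    simp only [Pi.add_apply]
    rw [a4]
    simp only [Pi.add_apply]
    rw [hWce, hMce, hDce, a5]
    simp only [Pi.zero_apply]
    ring
  have hYcond : ∀ r, q ≤ r →
      μ[Yp (r + 1)|ℱ r] =ᵐ[μ] fun ω => W ω + M r ω - (μ[g|ℱ r]) ω - D (r + 1) ω := by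
    intro r hr
    have h0 : μ[Yp (r + 1)|ℱ r]
        =ᵐ[μ] μ[(W + M (r + 1) - μ[g|ℱ (r + 1)] - D (r + 1) : Ω → ℝ)|ℱ r] := by
      refine condExp_congr_ae ?_
      refine (hYform (r + 1) (by omega)).trans ?_
      exact Filter.Eventually.of_forall fun ω => rfl
    have e1 := condExp_sub (m := ℱ r) (μ := μ) (f := W + M (r + 1) - μ[g|ℱ (r + 1)])
      (g := D (r + 1))
      ((hWint.add (hMint (r + 1) (by omega))).sub integrable_condExp) (hDint (r + 1))
    have e2 := condExp_sub (m := ℱ r) (μ := μ) (f := W + M (r + 1)) (g := μ[g|ℱ (r + 1)])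
      (hWint.add (hMint (r + 1) (by omega))) integrable_condExp
    have e3 := condExp_add (m := ℱ r) (μ := μ) (f := W) (g := M (r + 1))
      hWint (hMint (r + 1) (by omega))
    have hWce : μ[W|ℱ r] = W :=
      condExp_of_stronglyMeasurable (hle r) (hWsm.mono (ℱ.mono (Nat.zero_le r))) hWint
    have hDce : μ[D (r + 1)|ℱ r] = D (r + 1) :=
      condExp_of_stronglyMeasurable (hle r) (hDsm (r + 1) r le_rfl) (hDint (r + 1))
    have htow : μ[(μ[g|ℱ (r + 1)])|ℱ r] =ᵐ[μ] μ[g|ℱ r] :=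
      condExp_condExp_of_le (ℱ.mono (Nat.le_succ r)) (hle (r + 1))
    refine h0.trans ?_
    filter_upwards [e1, e2, e3, htow, hMmart r (by omega)] with ω a1 a2 a3 a4 a5
    rw [a1]
    simp only [Pi.sub_apply, Pi.add_apply]
    rw [a2]
    simp only [Pi.sub_apply, Pi.add_apply]
    rw [a3]
    simp only [Pi.add_apply]
    rw [hWce, hDce, a4, a5]
  refine ⟨doobMb μ ℱ q Yp,
    isDoobMartingaleFrom_doobMb μ ℱ q Yp (fun r _ => stronglyMeasurable_condExp)
      (fun r => integrable_condExp), ?_⟩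
  intro r hr
  have hinc := doobMb_increment μ ℱ q Yp W M (fun s => μ[g|ℱ s]) D hYform hYcond r hr
  filter_upwards [hinc] with ω h
  rw [h]
  ring
end
end
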